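/- Let AP = {p}. There exist constants c, d ∈ ℕ such that for every n > 1 there is a bounded HyperLTL_C formula ψ with exactly two free trace variables x and y, containing only existential trace quantifiers (hence of quantifier alternation depth 0), whose size (number of distinct subformulas) is at most c·n^d, such that for all traces π_x and π_y over AP, the assignment {x ↦ (π_x,0), y ↦ (π_y,0)} satisfies ψ (with the existential quantifiers ranging over the set of all traces over AP) if and only if: (i) p occurs at exactly one position of π_x and at exactly one position of π_y; and (ii) for every i ≥ 0, p ∈ π_x(i) if and only if p ∈ π_y(i + n·2^n·2^{2^n}). -/

import Mathlib

set_option linter.unusedVariables false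

open Classical

/-- A trace over a set `AP` of atomic propositions: an infinite word over `2^AP`. -/
abbrev Trace (AP : Type) : Type := ℕ → Set AP

/-- Syntax of LTL formulas over `AP` (with `⊤`). -/
inductive LTL (AP : Type) : Type where
  | tt   : LTL AP
  | atom : AP → LTL AP
  | neg  : LTL AP → LTL AP
  | conj : LTL AP → LTL AP → LTL AP
  | next : LTL AP → LTL AP
  | untl : LTL AP → LTL AP → LTL AP
deriving DecidableEq

namespace LTL

/-- Satisfaction of an LTL formula on a pointed trace. -/
def Sat {AP : Type} : LTL AP → Trace AP → ℕ → Prop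
  | tt, _, _ => True
  | atom p, π, i => p ∈ π i
  | neg θ, π, i => ¬ Sat θ π i
  | conj θ₁ θ₂, π, i => Sat θ₁ π i ∧ Sat θ₂ π i
  | next θ, π, i => Sat θ π (i + 1)
  | untl θ₁ θ₂, π, i => ∃ j, i ≤ j ∧ Sat θ₂ π j ∧ ∀ k, i ≤ k → k < j → Sat θ₁ π k

def or {AP : Type} (a b : LTL AP) : LTL AP := neg (conj (neg a) (neg b))
def impl {AP : Type} (a b : LTL AP) : LTL AP := or (neg a) b
def iff {AP : Type} (a b : LTL AP) : LTL AP := conj (impl a b) (impl b a)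
def ev {AP : Type} (a : LTL AP) : LTL AP := untl tt a
def alw {AP : Type} (a : LTL AP) : LTL AP := neg (ev (neg a))

def bigConj {AP : Type} : List (LTL AP) → LTL AP
  | [] => tt
  | θ :: l => conj θ (bigConj l)

def bigDisj {AP : Type} : List (LTL AP) → LTL AP
  | [] => neg tt
  | θ :: l => or θ (bigDisj l)

/-- The subformulas of an LTL formula. -/
def subf {AP : Type} [DecidableEq AP] : LTL AP → Finset (LTL AP)
  | tt => {tt}
  | atom p => {atom p}
  | neg θ => insert (neg θ) (subf θ)
  | conj a b => insert (conj a b) (subf a ∪ subf b)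
  | next θ => insert (next θ) (subf θ)
  | untl a b => insert (untl a b) (subf a ∪ subf b)

/-- Negation, identifying `¬¬θ` with `θ`. -/
def negId {AP : Type} : LTL AP → LTL AP
  | neg θ => θ
  | θ => neg θ

end LTL

/-- The closure of a finite set of LTL formulas: all subformulas and their
negations (identifying `¬¬θ` with `θ`). -/
def clOf {AP : Type} [DecidableEq AP] (Γ : Finset (LTL AP)) : Finset (LTL AP) :=
  (Γ.biUnion LTL.subf) ∪ (Γ.biUnion LTL.subf).image LTL.negId

/-- Positions `h` and `k` of `π` disagree on the truth value of some formula of `Γ`. -/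
def profDiff {AP : Type} (Γ : Set (LTL AP)) (π : Trace AP) (h k : ℕ) : Prop :=
  ∃ θ ∈ Γ, ¬ (LTL.Sat θ π h ↔ LTL.Sat θ π k)

/-- `IsStutterFact Γ π m f` : the increasing sequence of positions `f 0, f 1, …`
(of length `m + 1`, where `m ∈ ℕ∪{∞}`) is the Γ-stutter factorization of `π`:
`f 0 = 0`; the sequence is strictly increasing (below `m`); the truth value of every
formula of `Γ` is constant on each segment `[f j, f (j+1))` for `j < m` and on the
final infinite segment `[f m, ∞)` when `m` is finite; and between two adjacent
segments the truth value of some formula of `Γ` changes. -/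
def IsStutterFact {AP : Type} (Γ : Set (LTL AP)) (π : Trace AP) (m : ℕ∞) (f : ℕ → ℕ) : Prop :=
  f 0 = 0 ∧
  (∀ j : ℕ, (j : ℕ∞) < m → f j < f (j + 1)) ∧
  (∀ j : ℕ, (j : ℕ∞) < m → ∀ θ ∈ Γ, ∀ h k : ℕ,
      f j ≤ h → h < f (j + 1) → f j ≤ k → k < f (j + 1) →
      (LTL.Sat θ π h ↔ LTL.Sat θ π k)) ∧
  (∀ mf : ℕ, m = (mf : ℕ∞) → ∀ θ ∈ Γ, ∀ h k : ℕ,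
      f mf ≤ h → f mf ≤ k → (LTL.Sat θ π h ↔ LTL.Sat θ π k)) ∧
  (∀ j : ℕ, (j : ℕ∞) < m → ∃ θ ∈ Γ, (LTL.Sat θ π (f j) ↔ ¬ LTL.Sat θ π (f (j + 1))))

/-- The position component of the Γ-successor `succ_Γ(π, i)` of a pointed trace:
the first position of the segment (of the Γ-stutter factorization of `π`)
following the one containing `i`, if it exists, and `i + 1` otherwise. -/
noncomputable def succPos {AP : Type} (Γ : Set (LTL AP)) (π : Trace AP) (i : ℕ) : ℕ :=
  if h : ∃ j, i < j ∧ profDiff Γ π i j then Nat.find h else i + 1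

/-- The sequence of positions of `π` selected by the Γ-stutter trace of `π`. -/
noncomputable def stfrNth {AP : Type} (Γ : Set (LTL AP)) (π : Trace AP) : ℕ → ℕ
  | 0 => 0
  | k + 1 => succPos Γ π (stfrNth Γ π k)

/-- The Γ-stutter trace `stfr_Γ(π)` of `π`. -/
noncomputable def stfr {AP : Type} (Γ : Set (LTL AP)) (π : Trace AP) : Trace AP :=
  fun k => π (stfrNth Γ π k)

/-- Syntax of LTL_S: LTL with stutter-relativized temporal modalities. -/
inductive LTLS (AP : Type) : Type where
  | tt    : LTLS AP
  | atom  : AP → LTLS AP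
  | neg   : LTLS AP → LTLS AP
  | conj  : LTLS AP → LTLS AP → LTLS AP
  | nextR : Finset (LTL AP) → LTLS AP → LTLS AP
  | untlR : Finset (LTL AP) → LTLS AP → LTLS AP → LTLS AP

/-- Satisfaction of an LTL_S formula on a pointed trace. -/
def LTLS.Sat {AP : Type} : LTLS AP → Trace AP → ℕ → Prop
  | .tt, _, _ => True
  | .atom p, π, i => p ∈ π i
  | .neg ψ, π, i => ¬ LTLS.Sat ψ π i
  | .conj a b, π, i => LTLS.Sat a π i ∧ LTLS.Sat b π i
  | .nextR Γ ψ, π, i => LTLS.Sat ψ π (succPos (↑Γ) π i)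
  | .untlR Γ a b, π, i => ∃ j : ℕ,
      LTLS.Sat b π ((succPos (↑Γ : Set (LTL AP)) π)^[j] i) ∧
      ∀ k < j, LTLS.Sat a π ((succPos (↑Γ : Set (LTL AP)) π)^[k] i)

/-- A pointed trace assignment: maps each trace variable to a pointed trace. -/
abbrev PTA (AP V : Type) : Type := V → Trace AP × ℕ

/-- The Γ-successor of a pointed trace assignment. -/
noncomputable def succA {AP V : Type} (Γ : Set (LTL AP)) (Δ : PTA AP V) : PTA AP V :=
  fun x => ((Δ x).1, succPos Γ (Δ x).1 (Δ x).2)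

/-- Quantifier-free HyperLTL_S formulas over propositions `AP` and trace variables `V`. -/
inductive HSQF (AP V : Type) : Type where
  | tt    : HSQF AP V
  | atom  : AP → V → HSQF AP V
  | neg   : HSQF AP V → HSQF AP V
  | conj  : HSQF AP V → HSQF AP V → HSQF AP V
  | nextR : Finset (LTL AP) → HSQF AP V → HSQF AP V
  | untlR : Finset (LTL AP) → HSQF AP V → HSQF AP V → HSQF AP V

namespace HSQF

/-- Satisfaction of a quantifier-free HyperLTL_S formula on a pointed trace assignment. -/
def Sat {AP V : Type} : HSQF AP V → PTA AP V → Prop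
  | tt, _ => True
  | atom p x, Δ => p ∈ (Δ x).1 (Δ x).2
  | neg ψ, Δ => ¬ Sat ψ Δ
  | conj a b, Δ => Sat a Δ ∧ Sat b Δ
  | nextR Γ ψ, Δ => Sat ψ (succA (↑Γ) Δ)
  | untlR Γ a b, Δ => ∃ i : ℕ,
      Sat b ((succA (↑Γ : Set (LTL AP)))^[i] Δ) ∧
      ∀ k < i, Sat a ((succA (↑Γ : Set (LTL AP)))^[k] Δ)

/-- Trace variables occurring in a quantifier-free HyperLTL_S formula. -/
def vars {AP V : Type} : HSQF AP V → Set V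
  | tt => ∅
  | atom _ x => {x}
  | neg ψ => vars ψ
  | conj a b => vars a ∪ vars b
  | nextR _ ψ => vars ψ
  | untlR _ a b => vars a ∪ vars b

/-- The subscripts of the temporal modalities occurring in a formula. -/
def subs {AP V : Type} : HSQF AP V → Set (Finset (LTL AP))
  | tt => ∅
  | atom _ _ => ∅
  | neg ψ => subs ψ
  | conj a b => subs a ∪ subs b
  | nextR Γ ψ => insert Γ (subs ψ)
  | untlR Γ a b => insert Γ (subs a ∪ subs b)

/-- `ψ` is in the fragment HyperLTL_S[Γ]: every modality subscript equals `Γ`. -/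
def InFragment {AP V : Type} (Γ : Finset (LTL AP)) (ψ : HSQF AP V) : Prop :=
  ∀ s ∈ ψ.subs, s = Γ

/-- `ψ` is a one-variable formula. -/
def OneVar {AP V : Type} (ψ : HSQF AP V) : Prop := ∃ x : V, ψ.vars ⊆ {x}

/-- Replace every modality subscript by `∅`, yielding a HyperLTL formula. -/
def toHLTL {AP V : Type} : HSQF AP V → HSQF AP V
  | tt => tt
  | atom p x => atom p x
  | neg ψ => neg (toHLTL ψ)
  | conj a b => conj (toHLTL a) (toHLTL b)
  | nextR _ ψ => nextR ∅ (toHLTL ψ)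
  | untlR _ a b => untlR ∅ (toHLTL a) (toHLTL b)

end HSQF

/-- Boolean combinations of formulas satisfying a base predicate. -/
inductive BoolCombOf {AP V : Type} (P : HSQF AP V → Prop) : HSQF AP V → Prop
  | base {ψ} : P ψ → BoolCombOf P ψ
  | tt : BoolCombOf P .tt
  | neg {ψ} : BoolCombOf P ψ → BoolCombOf P (.neg ψ)
  | conj {a b} : BoolCombOf P a → BoolCombOf P b → BoolCombOf P (.conj a b)

/-- Trace quantifiers. -/
inductive Quant : Type where
  | ex  : Quant
  | all : Quant
deriving DecidableEq

/-- Satisfaction of a block of trace quantifiers followed by a matrix `P`,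
over a set `L` of traces, starting from the assignment `Δ`. -/
def SatPfx {AP V : Type} [DecidableEq V] (L : Set (Trace AP)) :
    List (Quant × V) → (PTA AP V → Prop) → PTA AP V → Prop
  | [], P, Δ => P Δ
  | (Quant.ex, x) :: qs, P, Δ => ∃ π ∈ L, SatPfx L qs P (Function.update Δ x (π, 0))
  | (Quant.all, x) :: qs, P, Δ => ∀ π ∈ L, SatPfx L qs P (Function.update Δ x (π, 0))

/-- A HyperLTL_S sentence: a quantifier prefix and a quantifier-free matrix. -/
structure HSSentence (AP V : Type) : Type where
  pre : List (Quant × V)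
  matrix : HSQF AP V

/-- The sentence is closed: quantified variables are pairwise distinct and
every trace variable of the matrix is bound by the prefix. -/
def HSSentence.Closed {AP V : Type} (φ : HSSentence AP V) : Prop :=
  (φ.pre.map Prod.snd).Nodup ∧ ∀ x ∈ φ.matrix.vars, x ∈ φ.pre.map Prod.snd

/-- `L ⊨ φ` for a HyperLTL_S sentence `φ` and a set `L` of traces. -/
def HSSentence.Models {AP V : Type} [DecidableEq V] (φ : HSSentence AP V)
    (L : Set (Trace AP)) : Prop :=
  ∀ Δ₀ : PTA AP V, SatPfx L φ.pre (fun Δ => φ.matrix.Sat Δ) Δ₀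

/-- A simple HyperLTL_S sentence: its matrix is a Boolean combination of
HyperLTL_S[Γ] formulas (for a common finite set `Γ` of LTL formulas) and of
one-variable quantifier-free formulas. -/
def HSSentence.Simple {AP V : Type} (φ : HSSentence AP V) : Prop :=
  ∃ Γ : Finset (LTL AP),
    BoolCombOf (fun ψ => ψ.InFragment Γ ∨ ψ.OneVar) φ.matrix

/-- A Kripke structure over `AP` with state type `S`. -/
structure Kripke (AP S : Type) : Type where
  init : Set S
  E : Set (S × S)
  total : ∀ s : S, ∃ t : S, (s, t) ∈ E
  V : S → Set AP

namespace Kripke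

/-- A path of a Kripke structure. -/
def IsPath {AP S : Type} (K : Kripke AP S) (ν : ℕ → S) : Prop :=
  ν 0 ∈ K.init ∧ ∀ i : ℕ, (ν i, ν (i + 1)) ∈ K.E

/-- The set of traces of a Kripke structure. -/
def Lang {AP S : Type} (K : Kripke AP S) : Set (Trace AP) :=
  {π | ∃ ν : ℕ → S, K.IsPath ν ∧ π = fun i => K.V (ν i)}

/-- The set of traces of `F`-fair paths of a Kripke structure. -/
def FairLang {AP S : Type} (K : Kripke AP S) (F : Set S) : Set (Trace AP) :=
  {π | ∃ ν : ℕ → S, K.IsPath ν ∧ (∀ N : ℕ, ∃ i, N ≤ i ∧ ν i ∈ F) ∧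
        π = fun i => K.V (ν i)}

end Kripke

/-- A finite Kripke structure over `AP` (states are `Fin n`). -/
structure FinKripke (AP : Type) : Type where
  n : ℕ
  K : Kripke AP (Fin n)

def FinKripke.Lang {AP : Type} (K : FinKripke AP) : Set (Trace AP) := K.K.Lang

def FinKripke.FairLang {AP : Type} (K : FinKripke AP) (F : Set (Fin K.n)) :
    Set (Trace AP) := K.K.FairLang F

/-- A nondeterministic Büchi automaton over alphabet `Sig` (finitely many states). -/
structure NBA (Sig : Type) : Type where
  n : ℕ
  init : Set (Fin n)
  trans : Set (Fin n × Sig × Fin n)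
  acc : Set (Fin n)

/-- The ω-language of an NBA. -/
def NBA.Lang {Sig : Type} (A : NBA Sig) : Set (ℕ → Sig) :=
  {w | ∃ ρ : ℕ → Fin A.n, ρ 0 ∈ A.init ∧ (∀ i : ℕ, (ρ i, w i, ρ (i + 1)) ∈ A.trans) ∧
        ∀ N : ℕ, ∃ i, N ≤ i ∧ ρ i ∈ A.acc}

/-- Positive Boolean formulas over `X`. -/
inductive PosBool (X : Type) : Type where
  | tt   : PosBool X
  | ff   : PosBool X
  | var  : X → PosBool X
  | por  : PosBool X → PosBool X → PosBool X
  | pand : PosBool X → PosBool X → PosBool X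

/-- Satisfaction of a positive Boolean formula by a set of variables. -/
def PosBool.SatBy {X : Type} (S : Set X) : PosBool X → Prop
  | .tt => True
  | .ff => False
  | .var x => x ∈ S
  | .por a b => a.SatBy S ∨ b.SatBy S
  | .pand a b => a.SatBy S ∧ b.SatBy S

/-- A Büchi alternating asynchronous word automaton with `m` directions (an `mAAWA`)
over alphabet `Sig`, with finitely many states. -/
structure AAWA (Sig : Type) (m : ℕ) : Type where
  n : ℕ
  init : Fin n
  trans : Fin n → (Fin m → Sig) → PosBool (Fin n × Fin m)
  acc : Set (Fin n)

/-- A run of an `mAAWA` over an `m`-tuple of infinite words: a `(Q × ℕ^m)`-labeled tree. -/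
structure AAWARun {Sig : Type} {m : ℕ} (A : AAWA Sig m) (w : Fin m → (ℕ → Sig)) : Type where
  T : Set (List ℕ)
  Lab : List ℕ → Fin A.n × (Fin m → ℕ)
  rootMem : [] ∈ T
  pclosed : ∀ τ ∈ T, ∀ σ : List ℕ, σ <+: τ → σ ∈ T
  rootLab : Lab [] = (A.init, fun _ => 0)
  step : ∀ τ ∈ T, ∃ (k : ℕ) (c : Fin k → Fin A.n × Fin m),
      (A.trans (Lab τ).1 (fun d => w d ((Lab τ).2 d))).SatBy (Set.range c) ∧
      (∀ j : ℕ, τ ++ [j] ∈ T ↔ j < k) ∧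
      ∀ j : Fin k, Lab (τ ++ [j.1]) =
        ((c j).1, fun d => if d = (c j).2 then (Lab τ).2 d + 1 else (Lab τ).2 d)

/-- The node of a branch at depth `i`. -/
def branchPrefix (b : ℕ → ℕ) (i : ℕ) : List ℕ := (List.range i).map b

/-- `b` describes an infinite branch of the run tree. -/
def AAWARun.IsBranch {Sig : Type} {m : ℕ} {A : AAWA Sig m} {w : Fin m → (ℕ → Sig)}
    (r : AAWARun A w) (b : ℕ → ℕ) : Prop :=
  ∀ i : ℕ, branchPrefix b i ∈ r.T

/-- A run is accepting if every infinite branch visits accepting states infinitely often. -/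
def AAWARun.Accepting {Sig : Type} {m : ℕ} {A : AAWA Sig m} {w : Fin m → (ℕ → Sig)}
    (r : AAWARun A w) : Prop :=
  ∀ b : ℕ → ℕ, r.IsBranch b → ∀ N : ℕ, ∃ i, N ≤ i ∧ (r.Lab (branchPrefix b i)).1 ∈ A.acc

/-- The language of an `mAAWA`: the `m`-tuples of infinite words admitting an accepting run. -/
def AAWA.Lang {Sig : Type} {m : ℕ} (A : AAWA Sig m) : Set (Fin m → (ℕ → Sig)) :=
  {w | ∃ r : AAWARun A w, r.Accepting}

/-- `A` is `k`-synchronous: in every run the reading heads stay within distance `k`. -/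
def AAWA.Synchronous {Sig : Type} {m : ℕ} (A : AAWA Sig m) (k : ℕ) : Prop :=
  ∀ (w : Fin m → (ℕ → Sig)) (r : AAWARun A w), ∀ τ ∈ r.T, ∀ d d' : Fin m,
    (r.Lab τ).2 d ≤ (r.Lab τ).2 d' + k

/-- Quantifier-free HyperLTL_C formulas over propositions `AP` and trace variables `V`:
HyperLTL extended with context modalities `⟨C⟩` for nonempty sets `C` of trace variables. -/
inductive HCQF (AP V : Type) : Type where
  | tt   : HCQF AP V
  | atom : AP → V → HCQF AP V
  | neg  : HCQF AP V → HCQF AP V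
  | conj : HCQF AP V → HCQF AP V → HCQF AP V
  | next : HCQF AP V → HCQF AP V
  | untl : HCQF AP V → HCQF AP V → HCQF AP V
  | ctx  : (C : Set V) → C.Nonempty → HCQF AP V → HCQF AP V

/-- `Δ +_C i` : advance by `i` the positions of the pointed traces assigned to
the variables in the context `C`, leaving the others unchanged. -/
noncomputable def shiftA {AP V : Type} (Δ : PTA AP V) (C : Set V) (i : ℕ) : PTA AP V :=
  fun x => if x ∈ C then ((Δ x).1, (Δ x).2 + i) else Δ x

namespace HCQF

/-- Satisfaction `(Δ, C) ⊨ ψ` of a quantifier-free HyperLTL_C formula. -/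
def Sat {AP V : Type} : HCQF AP V → PTA AP V → Set V → Prop
  | tt, _, _ => True
  | atom p x, Δ, _ => p ∈ (Δ x).1 (Δ x).2
  | neg ψ, Δ, C => ¬ Sat ψ Δ C
  | conj a b, Δ, C => Sat a Δ C ∧ Sat b Δ C
  | next ψ, Δ, C => Sat ψ (shiftA Δ C 1) C
  | untl a b, Δ, C => ∃ i : ℕ, Sat b (shiftA Δ C i) C ∧ ∀ k < i, Sat a (shiftA Δ C k) C
  | ctx C' _ ψ, Δ, _ => Sat ψ Δ C'

/-- Trace variables occurring in a quantifier-free HyperLTL_C formula. -/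
def vars {AP V : Type} : HCQF AP V → Set V
  | tt => ∅
  | atom _ x => {x}
  | neg ψ => vars ψ
  | conj a b => vars a ∪ vars b
  | next ψ => vars ψ
  | untl a b => vars a ∪ vars b
  | ctx _ _ ψ => vars ψ

/-- The set of subformulas of a quantifier-free HyperLTL_C formula. -/
def subf {AP V : Type} : HCQF AP V → Set (HCQF AP V)
  | tt => {tt}
  | atom p x => {atom p x}
  | neg ψ => insert (neg ψ) (subf ψ)
  | conj a b => insert (conj a b) (subf a ∪ subf b)
  | next ψ => insert (next ψ) (subf ψ)
  | untl a b => insert (untl a b) (subf a ∪ subf b)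
  | ctx C h ψ => insert (ctx C h ψ) (subf ψ)

/-- The size of a formula: its number of distinct subformulas. -/
noncomputable def size {AP V : Type} (ψ : HCQF AP V) : ℕ := ψ.subf.ncard

/-- Nesting depth of context modalities. -/
def ctxDepth {AP V : Type} : HCQF AP V → ℕ
  | tt => 0
  | atom _ _ => 0
  | neg ψ => ctxDepth ψ
  | conj a b => max (ctxDepth a) (ctxDepth b)
  | next ψ => ctxDepth ψ
  | untl a b => max (ctxDepth a) (ctxDepth b)
  | ctx _ _ ψ => ctxDepth ψ + 1

/-- Auxiliary predicate for the bounded fragment. `glob` is the set of all trace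
variables occurring in the formula of interest (a context `C` is global iff
`glob ⊆ C`); the flag records whether the current position is in the scope of a
non-global context modality, where only the temporal modality `X` is allowed. -/
def BoundedAux {AP V : Type} (glob : Set V) : Bool → HCQF AP V → Prop
  | _, tt => True
  | _, atom _ _ => True
  | t, neg ψ => BoundedAux glob t ψ
  | t, conj a b => BoundedAux glob t a ∧ BoundedAux glob t b
  | t, next ψ => BoundedAux glob t ψ
  | false, untl a b => BoundedAux glob false a ∧ BoundedAux glob false b
  | true, untl _ _ => False
  | t, ctx C _ ψ => (glob ⊆ C → BoundedAux glob false ψ) ∧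
                    (¬ glob ⊆ C → BoundedAux glob true ψ)

/-- `ψ` is bounded: the only temporal modality occurring in (the scope of) a
non-global context is the next modality `X`. -/
def IsBounded {AP V : Type} (ψ : HCQF AP V) : Prop := BoundedAux ψ.vars false ψ

/-- Auxiliary predicate for the fragment where each temporal modality occurring in
(the scope of) a non-global context is the eventually modality `F` (i.e. `⊤ U ·`). -/
def FOnlyAux {AP V : Type} (glob : Set V) : Bool → HCQF AP V → Prop
  | _, tt => True
  | _, atom _ _ => True
  | t, neg ψ => FOnlyAux glob t ψ
  | t, conj a b => FOnlyAux glob t a ∧ FOnlyAux glob t b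
  | false, next ψ => FOnlyAux glob false ψ
  | true, next _ => False
  | false, untl a b => FOnlyAux glob false a ∧ FOnlyAux glob false b
  | true, untl a b => a = tt ∧ FOnlyAux glob true b
  | t, ctx C _ ψ => (glob ⊆ C → FOnlyAux glob false ψ) ∧
                    (¬ glob ⊆ C → FOnlyAux glob true ψ)

/-- Every temporal modality occurring in the scope of a non-global context
modality is the eventually modality `F`. -/
def FOnlyInNonGlobal {AP V : Type} (glob : Set V) (ψ : HCQF AP V) : Prop :=
  FOnlyAux glob false ψ

end HCQF

/-- A HyperLTL_C sentence: a quantifier prefix and a quantifier-free matrix. -/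
structure HCSentence (AP V : Type) : Type where
  pre : List (Quant × V)
  matrix : HCQF AP V

/-- The sentence is closed: quantified variables are pairwise distinct and every
trace variable of the matrix is bound by the prefix. -/
def HCSentence.Closed {AP V : Type} (φ : HCSentence AP V) : Prop :=
  (φ.pre.map Prod.snd).Nodup ∧ ∀ x ∈ φ.matrix.vars, x ∈ φ.pre.map Prod.snd

/-- `L ⊨ φ` for a HyperLTL_C sentence `φ` and a set `L` of traces
(the matrix is evaluated in the global context `VAR`). -/
def HCSentence.Models {AP V : Type} [DecidableEq V] (φ : HCSentence AP V)
    (L : Set (Trace AP)) : Prop :=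
  ∀ Δ₀ : PTA AP V, SatPfx L φ.pre (fun Δ => φ.matrix.Sat Δ Set.univ) Δ₀

/-- An instance of Post's Correspondence Problem over the alphabet `A`:
`2 * n` nonempty finite words. -/
structure PCPInstance (A : Type) : Type where
  n : ℕ
  npos : 0 < n
  word : Fin 2 → Fin n → List A
  ne : ∀ (ℓ : Fin 2) (i : Fin n), word ℓ i ≠ []

/-- The PCP instance has a solution. -/
def PCPInstance.HasSolution {A : Type} (P : PCPInstance A) : Prop :=
  ∃ is : List (Fin P.n), is ≠ [] ∧
    (is.map (P.word 0)).flatten = (is.map (P.word 1)).flatten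

/-- Atomic propositions used in the PCP reduction:
`AP = Σ ∪ {#} ∪ {p₁,…,pₙ} ∪ {q₁,q₂}`. -/
inductive PCPAP (A : Type) (n : ℕ) : Type where
  | sym  : A → PCPAP A n
  | hash : PCPAP A n
  | pvar : Fin n → PCPAP A n
  | qvar : Fin 2 → PCPAP A n
deriving DecidableEq

/-- `[u, p_i, q_ℓ]` : the word `u` marked with `p_i` and `q_ℓ`, whose last letter is
additionally marked with `#`. -/
def markWord {A : Type} {n : ℕ} (i : Fin n) (ℓ : Fin 2) : List A → List (Set (PCPAP A n))
  | [] => []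
  | [a] => [{PCPAP.sym a, PCPAP.pvar i, PCPAP.qvar ℓ, PCPAP.hash}]
  | a :: b :: rest => ({PCPAP.sym a, PCPAP.pvar i, PCPAP.qvar ℓ} : Set (PCPAP A n)) ::
      markWord i ℓ (b :: rest)

/-- The trace consisting of the finite word `l` followed by the trace `tail`. -/
def listToTrace {A : Type} (l : List (Set A)) (tail : Trace A) : Trace A :=
  fun k => if h : k < l.length then l.get ⟨k, h⟩ else tail (k - l.length)

/-- The well-formed trace `π^ℓ_{i₁,…,i_k} = {#}·[u^ℓ_{i₁},p_{i₁},q_ℓ]⋯[u^ℓ_{i_k},p_{i_k},q_ℓ]·{#}^ω`. -/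
def wfTrace {A : Type} (P : PCPInstance A) (ℓ : Fin 2) (is : List (Fin P.n)) :
    Trace (PCPAP A P.n) :=
  listToTrace (({PCPAP.hash} : Set (PCPAP A P.n)) ::
      (is.map fun i => markWord i ℓ (P.word ℓ i)).flatten)
    (fun _ => {PCPAP.hash})

/-- A well-formed trace for the PCP instance `P`. -/
def IsWellFormed {A : Type} (P : PCPInstance A) (π : Trace (PCPAP A P.n)) : Prop :=
  ∃ (ℓ : Fin 2) (is : List (Fin P.n)), is ≠ [] ∧ π = wfTrace P ℓ is

/-- The set `Γ = {#, p₁, …, pₙ}` of atomic propositions. -/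
def pcpGammaProp (A : Type) (n : ℕ) : Set (PCPAP A n) :=
  {x | x = PCPAP.hash ∨ ∃ i : Fin n, x = PCPAP.pvar i}

/-- The set `Γ = {#, p₁, …, pₙ}` regarded as a set of LTL formulas. -/
def pcpGammaLTL (A : Type) (n : ℕ) : Set (LTL (PCPAP A n)) :=
  LTL.atom '' pcpGammaProp A n

/-- The set `Γ = {#, p₁, …, pₙ}` as a finite set of LTL formulas. -/
def pcpGammaFinset (A : Type) [DecidableEq A] (n : ℕ) : Finset (LTL (PCPAP A n)) :=
  insert (LTL.atom PCPAP.hash)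
    ((Finset.univ : Finset (Fin n)).image fun i => LTL.atom (PCPAP.pvar i))

/-- Instructions of a Minsky 2-counter machine. -/
inductive MOp : Type where
  | inc  : MOp
  | dec  : MOp
  | zero : MOp
deriving DecidableEq

/-- A Minsky 2-counter machine (locations are `Fin nQ`; no transition leaves the
halting location). -/
structure Minsky : Type where
  nQ : ℕ
  qinit : Fin nQ
  qhalt : Fin nQ
  trans : Set (Fin nQ × (MOp × Fin 2) × Fin nQ)
  halt_no_out : ∀ q op q', (q, op, q') ∈ trans → q ≠ qhalt

/-- The one-step relation between configurations of a Minsky machine. -/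
def Minsky.Step (M : Minsky) (c c' : Fin M.nQ × (Fin 2 → ℕ)) : Prop :=
  ∃ (op : MOp) (cnt : Fin 2), (c.1, (op, cnt), c'.1) ∈ M.trans ∧
    (∀ d : Fin 2, d ≠ cnt → c'.2 d = c.2 d) ∧
    (match op with
      | MOp.inc => c'.2 cnt = c.2 cnt + 1
      | MOp.dec => 0 < c.2 cnt ∧ c'.2 cnt + 1 = c.2 cnt
      | MOp.zero => c.2 cnt = 0 ∧ c'.2 cnt = 0)

/-- The machine halts: some computation from the initial configuration reaches the
halting location. -/
def Minsky.Halts (M : Minsky) : Prop :=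
  ∃ c : Fin M.nQ × (Fin 2 → ℕ),
    Relation.ReflTransGen M.Step (M.qinit, fun _ => 0) c ∧ c.1 = M.qhalt

/-- Projection of a trace over `AP ⊕ B` onto `AP`. -/
def projSum {AP B : Type} (w : Trace (AP ⊕ B)) : Trace AP :=
  fun i => {p | Sum.inl p ∈ w i}

/-- The proposition `at(θ)` associated with an LTL formula (`at(p) = p` for atoms). -/
def atProp {AP : Type} : LTL AP → AP ⊕ LTL AP
  | LTL.atom p => Sum.inl p
  | θ => Sum.inr θ


/-! ### Auxiliary development for stmt19 -/

namespace S19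

abbrev F : Type := HCQF Unit ℕ

def P (v : ℕ) : F := HCQF.atom () v
def fand (a b : F) : F := HCQF.conj a b
def fneg (a : F) : F := HCQF.neg a
def f_or (a b : F) : F := fneg (fand (fneg a) (fneg b))
def fimp (a b : F) : F := f_or (fneg a) b
def fiff (a b : F) : F := fand (fimp a b) (fimp b a)
def fxor (a b : F) : F := fneg (fiff a b)
def fX (a : F) : F := HCQF.next a
def fU (a b : F) : F := HCQF.untl a b
def fF (a : F) : F := fU HCQF.tt a
def fG (a : F) : F := fneg (fU HCQF.tt (fneg a))
def bigAnd : List F → F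
  | [] => HCQF.tt
  | a :: l => fand a (bigAnd l)

/-- Trace variable names. -/
def Rv (b : ℕ) : ℕ := 2 + b
def Av (n b : ℕ) : ℕ := 2 + 2*n + b
def Cv (n : ℕ) : ℕ := 2 + 4*n
def Gv (n : ℕ) : ℕ := 3 + 4*n

def LL (n : ℕ) : ℕ := n * 2^n
def MM (n : ℕ) : ℕ := 2^(2^n)

def addrEq (n K : ℕ) : F :=
  bigAnd ((List.range (2*n)).map fun b => if K.testBit b then P (Av n b) else fneg (P (Av n b)))
def bstart (n : ℕ) : F := addrEq n 0
def Wf (n : ℕ) : F := addrEq n (LL n - 1)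
def addr2n (n : ℕ) : F := addrEq n (2^n)
def readBit (n b : ℕ) : F := fxor (P (Rv b)) (P (Av n 0))
def MatchF (n : ℕ) : F :=
  bigAnd ((List.range (2*n)).map fun b => fiff (readBit n b) (P (Av n b)))
def lowAnd (n b : ℕ) : F := bigAnd ((List.range b).map fun b' => P (Av n b'))
def IncA (n : ℕ) : F :=
  bigAnd ((List.range (2*n)).map fun b =>
    fiff (fX (P (Av n b))) (fxor (P (Av n b)) (lowAnd n b)))
def AddrRules (n : ℕ) : F :=
  fG (fand (fimp (Wf n) (fX (bstart n))) (fimp (fneg (Wf n)) (IncA n)))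
def GRules (n : ℕ) : F :=
  fand (fG (fimp (bstart n) (P (Gv n))))
       (fG (fimp (fneg (fX (bstart n)))
            (fiff (fX (P (Gv n))) (fand (P (Gv n)) (P (Cv n))))))
def ZeroVal (n : ℕ) : F := fand (fneg (P (Cv n))) (fX (fU (fneg (P (Cv n))) (bstart n)))
def dvg (n : ℕ) : F := fxor (P (Cv n)) (P (Gv n))
def NextC (n : ℕ) : F := fX (fU (fneg (MatchF n)) (fand (MatchF n) (P (Cv n))))
def NextNC (n : ℕ) : F := fX (fU (fneg (MatchF n)) (fand (MatchF n) (fneg (P (Cv n)))))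
def CrossRule (n : ℕ) : F :=
  fG (fimp (MatchF n) (fand (fimp (dvg n) (NextC n)) (fimp (fneg (dvg n)) (NextNC n))))
def Psi (n : ℕ) : ℕ → F
  | 0 => HCQF.ctx Set.univ ⟨0, trivial⟩ (CrossRule n)
  | b+1 => fand (HCQF.ctx {Rv b} ⟨Rv b, rfl⟩ (fX (Psi n b))) (Psi n b)
def HasBit (n : ℕ) : F := fX (fU (fneg (bstart n)) (fand (addr2n n) (P (Cv n))))
def NoBit (n : ℕ) : F := fX (fU (fneg (bstart n)) (fand (addr2n n) (fneg (P (Cv n)))))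
def YRule (n : ℕ) : F :=
  fU (fand (fimp (bstart n) (NoBit n)) (fneg (P 1)))
     (fand (bstart n) (fand (HasBit n) (P 1)))
def EOnce (v : ℕ) : F := fU (fneg (P v)) (fand (P v) (fX (fG (fneg (P v)))))
def REq (n : ℕ) : F :=
  bigAnd ((List.range (2*n)).map fun b => fG (fiff (P (Rv b)) (P (Av n 0))))
def AnchorList (n : ℕ) : List F :=
  [P 0, addrEq n 0, ZeroVal n, AddrRules n, GRules n, Psi n (2*n), YRule n]
def Anchor (n : ℕ) : F := fF (bigAnd (AnchorList n))
def matrixF (n : ℕ) : F := bigAnd [EOnce 0, EOnce 1, REq n, Anchor n]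
def pre19 (n : ℕ) : List (Quant × ℕ) := (List.range (4*n+2)).map fun k => (Quant.ex, k+2)
def sent (n : ℕ) : HCSentence Unit ℕ := ⟨pre19 n, matrixF n⟩

/-! ### Basic satisfaction lemmas -/

def Δat (τ : ℕ → Trace Unit) (q : ℕ → ℕ) : PTA Unit ℕ := fun v => (τ v, q v)
def Δc (τ : ℕ → Trace Unit) (t : ℕ) : PTA Unit ℕ := Δat τ (fun _ => t)

lemma shiftA_Δat_univ (τ : ℕ → Trace Unit) (q : ℕ → ℕ) (i : ℕ) :
    shiftA (Δat τ q) Set.univ i = Δat τ (fun v => q v + i) := by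
  funext v; simp [shiftA, Δat]

lemma Sat_P {τ q C v} : (P v).Sat (Δat τ q) C ↔ () ∈ τ v (q v) := Iff.rfl
lemma Sat_neg {a : F} {Δ C} : (fneg a).Sat Δ C ↔ ¬ a.Sat Δ C := Iff.rfl
lemma Sat_and {a b : F} {Δ C} : (fand a b).Sat Δ C ↔ a.Sat Δ C ∧ b.Sat Δ C := Iff.rfl
lemma Sat_or {a b : F} {Δ C} : (f_or a b).Sat Δ C ↔ a.Sat Δ C ∨ b.Sat Δ C := by
  rw [f_or, Sat_neg, Sat_and, Sat_neg, Sat_neg]; tauto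
lemma Sat_imp {a b : F} {Δ C} : (fimp a b).Sat Δ C ↔ (a.Sat Δ C → b.Sat Δ C) := by
  rw [fimp, Sat_or, Sat_neg]; tauto
lemma Sat_iff {a b : F} {Δ C} : (fiff a b).Sat Δ C ↔ (a.Sat Δ C ↔ b.Sat Δ C) := by
  rw [fiff, Sat_and, Sat_imp, Sat_imp]; tauto
lemma Sat_xor {a b : F} {Δ C} : (fxor a b).Sat Δ C ↔ ¬ (a.Sat Δ C ↔ b.Sat Δ C) := by
  rw [fxor, Sat_neg, Sat_iff]
lemma Sat_X {a : F} {Δ C} : (fX a).Sat Δ C ↔ a.Sat (shiftA Δ C 1) C := Iff.rfl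
lemma Sat_U {a b : F} {Δ C} :
    (fU a b).Sat Δ C ↔ ∃ i, b.Sat (shiftA Δ C i) C ∧ ∀ k < i, a.Sat (shiftA Δ C k) C := Iff.rfl
lemma Sat_ctx {a : F} {D : Set ℕ} {h Δ C} : (HCQF.ctx D h a).Sat Δ C ↔ a.Sat Δ D := Iff.rfl
lemma Sat_tt {Δ C} : (HCQF.tt : F).Sat Δ C ↔ True := Iff.rfl

lemma Sat_bigAnd {l : List F} {Δ C} : (bigAnd l).Sat Δ C ↔ ∀ a ∈ l, a.Sat Δ C := by
  induction l with
  | nil => simpa [bigAnd] using (Sat_tt (Δ := Δ) (C := C))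
  | cons a l ih => rw [bigAnd, Sat_and, ih]; simp

lemma Sat_bigAnd_range {m : ℕ} {Fm : ℕ → F} {Δ C} :
    (bigAnd ((List.range m).map Fm)).Sat Δ C ↔ ∀ b < m, (Fm b).Sat Δ C := by
  rw [Sat_bigAnd]; simp

lemma Sat_X_univ {a : F} {τ q} :
    (fX a).Sat (Δat τ q) Set.univ ↔ a.Sat (Δat τ (fun v => q v + 1)) Set.univ := by
  rw [Sat_X, shiftA_Δat_univ]

lemma Sat_U_univ {a b : F} {τ q} :
    (fU a b).Sat (Δat τ q) Set.univ ↔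
      ∃ i, b.Sat (Δat τ (fun v => q v + i)) Set.univ ∧
        ∀ k < i, a.Sat (Δat τ (fun v => q v + k)) Set.univ := by
  rw [Sat_U]; simp_rw [shiftA_Δat_univ]

lemma Sat_F_univ {a : F} {τ q} :
    (fF a).Sat (Δat τ q) Set.univ ↔ ∃ i, a.Sat (Δat τ (fun v => q v + i)) Set.univ := by
  rw [fF, Sat_U_univ]; simp [Sat_tt]

lemma Sat_G_univ {a : F} {τ q} :
    (fG a).Sat (Δat τ q) Set.univ ↔ ∀ i, a.Sat (Δat τ (fun v => q v + i)) Set.univ := by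
  rw [fG, Sat_neg, Sat_U_univ]
  constructor
  · intro h i
    by_contra hc
    exact h ⟨i, (Sat_neg).mpr hc, fun k _ => trivial⟩
  · rintro h ⟨i, hi, -⟩
    exact (Sat_neg.mp hi) (h i)

lemma Δc_eq (τ : ℕ → Trace Unit) (t i : ℕ) :
    Δat τ (fun _ => t + i) = Δc τ (t + i) := rfl

/-! ### Arithmetic lemmas on bits -/

lemma lowOnes_iff (v b : ℕ) : (∀ b' < b, v.testBit b' = true) ↔ v % 2^b = 2^b - 1 := by
  constructor
  · intro h
    apply Nat.eq_of_testBit_eq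
    intro i
    rw [Nat.testBit_mod_two_pow, Nat.testBit_two_pow_sub_one]
    by_cases hi : i < b <;> simp [hi, h]
  · intro h b' hb'
    have := congrArg (fun x => x.testBit b') h
    simpa [Nat.testBit_mod_two_pow, hb', Nat.testBit_two_pow_sub_one] using this

lemma lowOnes_succ (v m : ℕ) :
    v % 2^(m+1) = 2^(m+1) - 1 ↔ (v % 2^m = 2^m - 1) ∧ v.testBit m = true := by
  rw [← lowOnes_iff, ← lowOnes_iff]
  constructor
  · intro h
    exact ⟨fun b' hb' => h b' (by omega), h m (by omega)⟩
  · rintro ⟨h1, h2⟩ b' hb'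
    rcases Nat.lt_or_ge b' m with h | h
    · exact h1 b' h
    · have : b' = m := by omega
      subst this; exact h2

lemma testBit_succ_eq (v b : ℕ) :
    (v+1).testBit b = ((v.testBit b).xor (decide (v % 2^b = 2^b - 1))) := by
  induction b generalizing v with
  | zero =>
    simp only [pow_zero, Nat.mod_one, Nat.testBit_zero]
    rcases Nat.mod_two_eq_zero_or_one v with h | h
    · have h2 : (v+1) % 2 = 1 := by omega
      simp [h, h2]
    · have h2 : (v+1) % 2 = 0 := by omega
      simp [h, h2]
  | succ b ih =>
    have hv := Nat.div_add_mod v 2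
    rcases Nat.mod_two_eq_zero_or_one v with h | h
    · -- v even
      have hdiv : (v+1)/2 = v/2 := by omega
      have hcond : ¬ (v % 2^(b+1) = 2^(b+1) - 1) := by
        intro hc
        have h1 : v % 2^(b+1) % 2 = v % 2 := Nat.mod_mod_of_dvd v ⟨2^b, by ring⟩
        have h2 : (2^(b+1) - 1) % 2 = 1 := by
          have : 2^(b+1) = 2 * 2^b := by ring
          have hb : 1 ≤ 2^b := Nat.one_le_two_pow
          omega
        rw [hc] at h1; omega
      rw [Nat.testBit_add_one, Nat.testBit_add_one, hdiv]
      simp [hcond]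
    · -- v odd
      have hdiv : (v+1)/2 = v/2 + 1 := by omega
      rw [Nat.testBit_add_one, Nat.testBit_add_one, hdiv, ih]
      have hcond : (v % 2^(b+1) = 2^(b+1) - 1) ↔ (v/2 % 2^b = 2^b - 1) := by
        have hb : 1 ≤ 2^b := Nat.one_le_two_pow
        have hmod : v % 2^(b+1) = 2 * (v/2 % 2^b) + 1 := by
          conv_lhs => rw [← hv]
          have h2 : 2 ^ (b+1) = 2 * 2^b := by ring
          rw [h2, h]
          have h' : v/2 = 2^b*(v/2/2^b) + v/2 % 2^b := (Nat.div_add_mod _ _).symm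
          have e1 : 2*(v/2)+1 = (2*2^b)*(v/2/2^b) + (2*(v/2 % 2^b)+1) := by
            conv_lhs => rw [h']
            ring
          rw [e1, Nat.mul_add_mod]
          exact Nat.mod_eq_of_lt (by have : v/2 % 2^b < 2^b := Nat.mod_lt _ (by positivity); omega)
        have hlt : v/2 % 2^b < 2^b := Nat.mod_lt _ (by positivity)
        omega
      congr 1
      simp only [decide_eq_decide]
      exact hcond.symm
  
lemma bitEqBelow {m a c : ℕ} (ha : a < 2^m) (hc : c < 2^m)
    (h : ∀ b < m, a.testBit b = c.testBit b) : a = c := by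
  apply Nat.eq_of_testBit_eq
  intro i
  by_cases hi : i < m
  · exact h i hi
  · have h2 : 2^m ≤ 2^i := Nat.pow_le_pow_right (by norm_num) (by omega)
    rw [Nat.testBit_lt_two_pow (by omega), Nat.testBit_lt_two_pow (by omega)]


/-! ### Numeric helpers -/

lemma LL_pos {n : ℕ} (hn : 2 ≤ n) : 0 < LL n := by
  have : 0 < 2^n := Nat.pow_pos (by norm_num)
  have : 0 < n := by omega
  simp [LL]; positivity

lemma pow2n_lt_LL {n : ℕ} (hn : 2 ≤ n) : 2^n < LL n := by
  have h1 : 2*2^n ≤ n*2^n := Nat.mul_le_mul_right _ hn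
  have h2 : 0 < 2^n := Nat.pow_pos (by norm_num)
  unfold LL; omega

lemma LL_le_pow {n : ℕ} : LL n ≤ 2^(2*n) := by
  have h1 : n ≤ 2^n := Nat.le_of_lt (Nat.lt_two_pow_self)
  have h2 : 2^(2*n) = 2^n * 2^n := by rw [two_mul, pow_add]
  rw [h2]
  exact Nat.mul_le_mul_right _ h1

lemma two_dvd_LL {n : ℕ} (hn : 2 ≤ n) : 2 ∣ LL n := by
  unfold LL
  have : ∃ m, n = m + 1 := ⟨n-1, by omega⟩
  obtain ⟨m, rfl⟩ := this
  exact ⟨(m+1) * 2^m, by ring⟩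

lemma MM_lt_pow {n : ℕ} (hn : 2 ≤ n) : MM n < 2^(LL n) :=
  Nat.pow_lt_pow_right (by norm_num) (pow2n_lt_LL hn)

lemma testBit0_mod {k L' : ℕ} (h : 2 ∣ L') : (k % L').testBit 0 = k.testBit 0 := by
  rw [Nat.testBit_zero, Nat.testBit_zero, Nat.mod_mod_of_dvd k h]

lemma mod_eq_of_modEq {a b L' : ℕ} (hL : 0 < L') (hab : a ≤ b) (h : b % L' = a % L') :
    ∃ q, b = a + L' * q := by
  have h2 : L' ∣ b - a := (Nat.modEq_iff_dvd' hab).mp (Nat.ModEq.symm h)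
  obtain ⟨q, hq⟩ := h2
  exact ⟨q, by omega⟩

/-! ### Characterisations -/

section Analysis

variable {n : ℕ} {τ : ℕ → Trace Unit}

lemma sat_addrEq (n K : ℕ) (τ : ℕ → Trace Unit) (u : ℕ) :
    (addrEq n K).Sat (Δc τ u) Set.univ ↔
      ∀ b < 2*n, (() ∈ τ (Av n b) u ↔ K.testBit b = true) := by
  rw [addrEq, Sat_bigAnd_range]
  refine forall_congr' fun b => forall_congr' fun hb => ?_
  by_cases h : K.testBit b <;> simp [h, Sat_neg, Sat_P, Δc]

lemma Sat_P_c {t v : ℕ} {C} : (P v).Sat (Δc τ t) C ↔ () ∈ τ v t := Iff.rfl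

lemma Sat_X_c {a : F} {t : ℕ} :
    (fX a).Sat (Δc τ t) Set.univ ↔ a.Sat (Δc τ (t+1)) Set.univ := Sat_X_univ

lemma Sat_U_c {a b : F} {t : ℕ} :
    (fU a b).Sat (Δc τ t) Set.univ ↔
      ∃ i, b.Sat (Δc τ (t+i)) Set.univ ∧ ∀ k < i, a.Sat (Δc τ (t+k)) Set.univ := Sat_U_univ

lemma Sat_F_c {a : F} {t : ℕ} :
    (fF a).Sat (Δc τ t) Set.univ ↔ ∃ i, a.Sat (Δc τ (t+i)) Set.univ := Sat_F_univ

lemma Sat_G_c {a : F} {t : ℕ} :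
    (fG a).Sat (Δc τ t) Set.univ ↔ ∀ i, a.Sat (Δc τ (t+i)) Set.univ := Sat_G_univ

lemma sat_lowAnd {u b : ℕ} :
    (lowAnd n b).Sat (Δc τ u) Set.univ ↔ ∀ b' < b, () ∈ τ (Av n b') u := by
  rw [lowAnd, Sat_bigAnd_range]
  exact Iff.rfl

/-- The address-tape invariant. -/
lemma addr_inv (hn : 2 ≤ n) {t : ℕ}
    (h0 : (addrEq n 0).Sat (Δc τ t) Set.univ)
    (hrules : (AddrRules n).Sat (Δc τ t) Set.univ) :
    ∀ m, ∀ b < 2*n, (() ∈ τ (Av n b) (t+m) ↔ (m % LL n).testBit b = true) := by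
  have hL : 0 < LL n := LL_pos hn
  have hLle : LL n ≤ 2^(2*n) := LL_le_pow
  rw [AddrRules, Sat_G_c] at hrules
  intro m
  induction m with
  | zero =>
    intro b hb
    have := (sat_addrEq n 0 τ t).mp h0 b hb
    simpa [Nat.zero_testBit] using this
  | succ m ih =>
    have hr := hrules m
    rw [Sat_and, Sat_imp, Sat_imp] at hr
    by_cases hW : m % LL n = LL n - 1
    · have hWsat : (Wf n).Sat (Δc τ (t+m)) Set.univ := by
        rw [Wf, sat_addrEq]
        intro b hb
        rw [ih b hb, hW]
      have hX := hr.1 hWsat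
      rw [Sat_X_c] at hX
      rw [bstart, sat_addrEq] at hX
      intro b hb
      have hXb := hX b hb
      have hmod : (m+1) % LL n = 0 := by
        have h2 := Nat.div_add_mod m (LL n)
        have h3 : m + 1 = LL n * (m / LL n) + LL n := by omega
        have h4 : LL n * (m / LL n) + LL n = LL n * (m / LL n + 1) := by ring
        rw [h3, h4, Nat.mul_mod_right]
      rw [hmod]
      have : t + m + 1 = t + (m+1) := by omega
      rw [this] at hXb
      simpa [Nat.zero_testBit] using hXb
    · have hWn : ¬ (Wf n).Sat (Δc τ (t+m)) Set.univ := by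
        rw [Wf, sat_addrEq]
        intro hcon
        apply hW
        have hW2 : LL n - 1 < 2^(2*n) := by omega
        refine bitEqBelow (m := 2*n) (Nat.lt_of_lt_of_le (Nat.mod_lt _ hL) hLle)
          hW2 ?_
        intro b hb
        have h1 := (ih b hb).symm.trans (hcon b hb)
        cases h2 : (m % LL n).testBit b <;> cases h3 : (LL n - 1).testBit b <;>
          simp [h2, h3] at h1 ⊢
      have hInc := hr.2 (Sat_neg.mpr hWn)
      rw [IncA, Sat_bigAnd_range] at hInc
      intro b hb
      have hib := hInc b hb
      rw [Sat_iff, Sat_X_c, Sat_xor] at hib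
      simp only [Sat_P_c] at hib
      have hlow : (lowAnd n b).Sat (Δc τ (t+m)) Set.univ ↔ (m % LL n) % 2^b = 2^b - 1 := by
        rw [sat_lowAnd, ← lowOnes_iff]
        constructor
        · intro h b' hb'
          exact (ih b' (by omega)).mp (h b' hb')
        · intro h b' hb'
          exact (ih b' (by omega)).mpr (h b' hb')
      have hmod : (m+1) % LL n = (m % LL n) + 1 := by
        have h1 : m % LL n < LL n := Nat.mod_lt _ hL
        have h2 := Nat.div_add_mod m (LL n)
        have h3 : m + 1 = LL n * (m / LL n) + (m % LL n + 1) := by omega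
        rw [h3, Nat.mul_add_mod]
        exact Nat.mod_eq_of_lt (by omega)
      rw [hmod, testBit_succ_eq]
      have hmain := hib
      have h1 : t + m + 1 = t + (m+1) := by omega
      rw [h1] at hmain
      rw [ih b hb, hlow] at hmain
      cases h2 : (m % LL n).testBit b <;>
        by_cases h3 : (m % LL n) % 2^b = 2^b - 1 <;>
          simp [h2, h3] at hmain ⊢ <;> tauto

/-- Characterisation of `addrEq` at position `t+m`, given the invariant. -/
lemma addrEq_char (hn : 2 ≤ n) {t : ℕ}
    (hinv : ∀ m, ∀ b < 2*n, (() ∈ τ (Av n b) (t+m) ↔ (m % LL n).testBit b = true))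
    {K m : ℕ} (hK : K < LL n) :
    (addrEq n K).Sat (Δc τ (t+m)) Set.univ ↔ m % LL n = K := by
  have hL : 0 < LL n := LL_pos hn
  have hLle : LL n ≤ 2^(2*n) := LL_le_pow
  rw [sat_addrEq]
  have hK2 : K < 2^(2*n) := lt_of_lt_of_le hK hLle
  constructor
  · intro h
    refine bitEqBelow (m := 2*n) (Nat.lt_of_lt_of_le (Nat.mod_lt _ hL) hLle)
      hK2 ?_
    intro b hb
    have h1 := (hinv m b hb).symm.trans (h b hb)
    cases h2 : (m % LL n).testBit b <;> cases h3 : K.testBit b <;> simp [h2, h3] at h1 ⊢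
  · intro h b hb
    rw [hinv m b hb, h]

end Analysis

/-! ### Context-shift machinery for `Psi` -/

def rsh (n : ℕ) (d : ℕ → Bool) (v : ℕ) : ℕ :=
  if 2 ≤ v ∧ v < 2 + 2*n ∧ d (v-2) = true then 1 else 0

def shiftRd (n : ℕ) (Δ : PTA Unit ℕ) (d : ℕ → Bool) : PTA Unit ℕ :=
  fun v => ((Δ v).1, (Δ v).2 + rsh n d v)

lemma rsh_eq_zero {v : ℕ} (d : ℕ → Bool) (h : v < 2 ∨ 2 + 2*n ≤ v) : rsh n d v = 0 := by
  unfold rsh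
  split_ifs with hc
  · exfalso; rcases h with h|h
    · omega
    · have := hc.2.1; omega
  · rfl

lemma rsh_Rv {b : ℕ} (hb : b < 2*n) (d : ℕ → Bool) :
    rsh n d (Rv b) = if d b = true then 1 else 0 := by
  unfold rsh Rv
  have h1 : 2 + b - 2 = b := by omega
  rw [h1]
  by_cases hd : d b = true <;> simp [hd] <;> omega

lemma psi_extract (n : ℕ) :
    ∀ b, b ≤ 2*n → ∀ (Δ : PTA Unit ℕ) (C : Set ℕ), (Psi n b).Sat Δ C →
      ∀ d : ℕ → Bool, (∀ b', b ≤ b' → d b' = false) →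
        (CrossRule n).Sat (shiftRd n Δ d) Set.univ := by
  intro b
  induction b with
  | zero =>
    intro _ Δ C hs d hd
    have hΔ : shiftRd n Δ d = Δ := by
      funext v
      have h0 : rsh n d v = 0 := by
        unfold rsh; split_ifs with hc
        · rw [hd (v-2) (Nat.zero_le _)] at hc; simp at hc
        · rfl
      simp [shiftRd, h0]
    rw [hΔ]
    exact hs
  | succ b ih =>
    intro hb Δ C hs d hd
    obtain ⟨h1, h2⟩ := (Sat_and.mp hs : (HCQF.ctx {Rv b} ⟨Rv b, rfl⟩ (fX (Psi n b))).Sat Δ C ∧ (Psi n b).Sat Δ C)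
    by_cases hdb : d b = true
    · have h1' : (Psi n b).Sat (shiftA Δ {Rv b} 1) {Rv b} := h1
      have hres := ih (by omega) _ _ h1' (fun b'' => if b'' = b then false else d b'')
        (fun b' hb' => by
          by_cases h : b' = b
          · simp [h]
          · simp [h]; exact hd b' (by omega))
      have hΔ : shiftRd n (shiftA Δ {Rv b} 1) (fun b'' => if b'' = b then false else d b'')
          = shiftRd n Δ d := by
        funext v
        by_cases hv : v = Rv b
        · subst hv
          have hA : Rv b ∈ ({Rv b} : Set ℕ) := rfl
          have e1 : rsh n (fun b'' => if b'' = b then false else d b'') (Rv b) = 0 := by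
            rw [rsh_Rv (by omega)]; simp
          have e2 : rsh n d (Rv b) = 1 := by rw [rsh_Rv (by omega)]; simp [hdb]
          unfold shiftRd shiftA
          rw [if_pos hA, e1, e2]
        · have hA : v ∉ ({Rv b} : Set ℕ) := hv
          have e1 : rsh n (fun b'' => if b'' = b then false else d b'') v = rsh n d v := by
            unfold rsh
            by_cases h2v : 2 ≤ v ∧ v < 2 + 2*n
            · have hne : v - 2 ≠ b := by unfold Rv at hv; omega
              simp [hne]
            · have hc1 : ¬ (2 ≤ v ∧ v < 2 + 2*n ∧ (if v - 2 = b then false else d (v-2)) = true) := by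
                intro hc; exact h2v ⟨hc.1, hc.2.1⟩
              have hc2 : ¬ (2 ≤ v ∧ v < 2 + 2*n ∧ d (v-2) = true) := by
                intro hc; exact h2v ⟨hc.1, hc.2.1⟩
              simp only [hc1, hc2, if_false]
          unfold shiftRd shiftA
          rw [if_neg hA, e1]
      rwa [hΔ] at hres
    · refine ih (by omega) _ _ h2 d ?_
      intro b' hb'
      rcases Nat.eq_or_lt_of_le hb' with h|h
      · rw [← h]
        cases hval : d b
        · rfl
        · exact absurd hval hdb
      · exact hd b' h

/-! ### Match characterisation -/

section Analysis2

variable {n : ℕ} {τ : ℕ → Trace Unit}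

lemma match_char (hn : 2 ≤ n) {t : ℕ}
    (hreq : ∀ b < 2*n, ∀ j, (() ∈ τ (Rv b) j ↔ () ∈ τ (Av n 0) j))
    (hinv : ∀ m, ∀ b < 2*n, (() ∈ τ (Av n b) (t+m) ↔ (m % LL n).testBit b = true))
    (d : ℕ → Bool) (m : ℕ) :
    (MatchF n).Sat (Δat τ (fun v => t + rsh n d v + m)) Set.univ ↔
      ∀ b < 2*n, (d b = true ↔ (m % LL n).testBit b = true) := by
  have hdvd := two_dvd_LL hn
  have h2n : 0 < 2*n := by omega
  rw [MatchF, Sat_bigAnd_range]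
  refine forall_congr' fun b => forall_congr' fun hb => ?_
  rw [readBit, Sat_iff, Sat_xor]
  simp only [Sat_P]
  have hAv0 : rsh n d (Av n 0) = 0 := rsh_eq_zero d (Or.inr (by unfold Av; omega))
  have hAvb : rsh n d (Av n b) = 0 := rsh_eq_zero d (Or.inr (by unfold Av; omega))
  have e0 : t + rsh n d (Av n 0) + m = t + m := by rw [hAv0]; omega
  have eb : t + rsh n d (Av n b) + m = t + m := by rw [hAvb]; omega
  rw [e0, eb]
  have hA0 : (() ∈ τ (Av n 0) (t+m)) ↔ (m.testBit 0 = true) := by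
    rw [hinv m 0 h2n, testBit0_mod hdvd]
  have hAb : (() ∈ τ (Av n b) (t+m)) ↔ ((m % LL n).testBit b = true) := hinv m b hb
  by_cases hdb : d b = true
  · have eR : t + rsh n d (Rv b) + m = t + (m + 1) := by rw [rsh_Rv hb, if_pos hdb]; omega
    rw [eR, hreq b hb (t + (m+1))]
    have hR : (() ∈ τ (Av n 0) (t+(m+1))) ↔ ((m+1).testBit 0 = true) := by
      rw [hinv (m+1) 0 h2n, testBit0_mod hdvd]
    rw [hR, hA0, hAb]
    have hflip : (m+1).testBit 0 = !(m.testBit 0) := by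
      rw [testBit_succ_eq]; simp [Nat.mod_one]
    rw [hflip, hdb]
    cases h1 : m.testBit 0 <;> cases h2 : (m % LL n).testBit b <;> simp
  · have eR : t + rsh n d (Rv b) + m = t + m := by rw [rsh_Rv hb, if_neg hdb]; omega
    rw [eR, hreq b hb (t+m), hA0, hAb]
    have : d b = false := by cases h : d b; rfl; exact absurd h hdb
    rw [this]
    cases h1 : m.testBit 0 <;> cases h2 : (m % LL n).testBit b <;> simp

lemma until_first_hit (hn : 2 ≤ n) {t : ℕ}
    (hreq : ∀ b < 2*n, ∀ j, (() ∈ τ (Rv b) j ↔ () ∈ τ (Av n 0) j))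
    (hinv : ∀ m, ∀ b < 2*n, (() ∈ τ (Av n b) (t+m) ↔ (m % LL n).testBit b = true))
    {d : ℕ → Bool} {m : ℕ}
    (hdm : ∀ b < 2*n, (d b = true ↔ (m % LL n).testBit b = true)) (body : F)
    (hsat : (fX (fU (fneg (MatchF n)) (fand (MatchF n) body))).Sat
      (Δat τ (fun v => t + rsh n d v + m)) Set.univ) :
    body.Sat (Δat τ (fun v => t + rsh n d v + (m + LL n))) Set.univ := by
  have hL : 0 < LL n := LL_pos hn
  have hLle : LL n ≤ 2^(2*n) := LL_le_pow
  simp only [Sat_X_univ, Sat_U_univ] at hsat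
  obtain ⟨i, hbody, hpre⟩ := hsat
  have key : ∀ (j : ℕ),
      (Δat τ fun v => t + rsh n d v + m + 1 + j) = (Δat τ fun v => t + rsh n d v + (m + 1 + j)) := by
    intro j; funext v; simp only [Δat]; congr 1; omega
  rw [key i] at hbody
  rw [Sat_and] at hbody
  have hmm := (match_char hn hreq hinv d (m+1+i)).mp hbody.1
  have hium : (m+1+i) % LL n = m % LL n := by
    refine bitEqBelow (m := 2*n) (lt_of_lt_of_le (Nat.mod_lt _ hL) hLle)
      (lt_of_lt_of_le (Nat.mod_lt _ hL) hLle) ?_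
    intro b hb
    have h1 := (hdm b hb).symm.trans (hmm b hb)
    cases h2 : ((m+1+i) % LL n).testBit b <;> cases h3 : (m % LL n).testBit b <;>
      simp [h2, h3] at h1 ⊢
  obtain ⟨qq, hqq⟩ := mod_eq_of_modEq hL (by omega) hium
  have hq1 : 1 ≤ qq := by
    rcases Nat.eq_zero_or_pos qq with h|h
    · rw [h, Nat.mul_zero] at hqq; omega
    · exact h
  rcases Nat.eq_or_lt_of_le hq1 with hq|hq
  · -- qq = 1 : i = LL n - 1
    have hi : i = LL n - 1 := by rw [← hq] at hqq; omega
    have e2 : m + 1 + i = m + LL n := by omega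
    rw [e2] at hbody
    exact hbody.2
  · -- qq ≥ 2 : contradiction with hpre at k = LL n - 1
    exfalso
    have h2q : LL n * 2 ≤ LL n * qq := Nat.mul_le_mul_left _ hq
    have hik : LL n - 1 < i := by omega
    have hk := hpre (LL n - 1) hik
    rw [key (LL n - 1), Sat_neg] at hk
    apply hk
    have e3 : m + 1 + (LL n - 1) = m + LL n := by omega
    rw [e3]
    refine (match_char hn hreq hinv d (m + LL n)).mpr ?_
    intro b hb
    rw [Nat.add_mod_right]
    exact hdm b hb

lemma cross_bits (hn : 2 ≤ n) {t : ℕ}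
    (hreq : ∀ b < 2*n, ∀ j, (() ∈ τ (Rv b) j ↔ () ∈ τ (Av n 0) j))
    (hinv : ∀ m, ∀ b < 2*n, (() ∈ τ (Av n b) (t+m) ↔ (m % LL n).testBit b = true))
    (hpsi : (Psi n (2*n)).Sat (Δc τ t) Set.univ) (m : ℕ) :
    () ∈ τ (Cv n) (t+(m+LL n)) ↔ ¬ (() ∈ τ (Cv n) (t+m) ↔ () ∈ τ (Gv n) (t+m)) := by
  have hL : 0 < LL n := LL_pos hn
  have hLle : LL n ≤ 2^(2*n) := LL_le_pow
  set d : ℕ → Bool := fun b => (m % LL n).testBit b with hd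
  have hsupp : ∀ b', 2*n ≤ b' → d b' = false := by
    intro b' hb'
    refine Nat.testBit_lt_two_pow (lt_of_lt_of_le (lt_of_lt_of_le (Nat.mod_lt _ hL) hLle) ?_)
    exact Nat.pow_le_pow_right (by norm_num) hb'
  have hcr := psi_extract n (2*n) le_rfl _ _ hpsi d hsupp
  rw [show shiftRd n (Δc τ t) d = Δat τ (fun v => t + rsh n d v) from rfl] at hcr
  simp only [CrossRule, Sat_G_univ] at hcr
  have hcrm := hcr m
  rw [Sat_imp, Sat_and, Sat_imp, Sat_imp] at hcrm
  have hmatch := (match_char hn hreq hinv d m).mpr (fun b hb => Iff.rfl)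
  have hcrm := hcrm hmatch
  have hCv0 : rsh n d (Cv n) = 0 := rsh_eq_zero d (Or.inr (by unfold Cv; omega))
  have hGv0 : rsh n d (Gv n) = 0 := rsh_eq_zero d (Or.inr (by unfold Gv; omega))
  have hdvg : (dvg n).Sat (Δat τ (fun v => t + rsh n d v + m)) Set.univ ↔
      ¬ (() ∈ τ (Cv n) (t+m) ↔ () ∈ τ (Gv n) (t+m)) := by
    rw [dvg, Sat_xor]
    simp only [Sat_P]
    rw [show t + rsh n d (Cv n) + m = t + m by rw [hCv0]; omega,
        show t + rsh n d (Gv n) + m = t + m by rw [hGv0]; omega]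
  by_cases hcase : () ∈ τ (Cv n) (t+m) ↔ () ∈ τ (Gv n) (t+m)
  · have h2 := hcrm.2 (by rw [Sat_neg, hdvg]; exact not_not_intro hcase)
    rw [NextNC] at h2
    have hres := until_first_hit hn hreq hinv (fun b hb => Iff.rfl) _ h2
    rw [Sat_neg] at hres
    simp only [Sat_P] at hres
    rw [show t + rsh n d (Cv n) + (m + LL n) = t + (m + LL n) by rw [hCv0]; omega] at hres
    constructor
    · intro h; exact absurd h hres
    · intro h; exact absurd hcase h
  · have h2 := hcrm.1 (hdvg.mpr hcase)
    rw [NextC] at h2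
    have hres := until_first_hit hn hreq hinv (fun b hb => Iff.rfl) _ h2
    simp only [Sat_P] at hres
    rw [show t + rsh n d (Cv n) + (m + LL n) = t + (m + LL n) by rw [hCv0]; omega] at hres
    constructor
    · intro _; exact hcase
    · intro _; exact hres

end Analysis2

section Analysis3

variable {n : ℕ} {τ : ℕ → Trace Unit}

lemma jLr_mod {j L r : ℕ} (h : r < L) : (j*L + r) % L = r := by
  rw [Nat.add_mod, Nat.mul_mod_left]
  simp [Nat.mod_eq_of_lt h]

lemma g_inv (hn : 2 ≤ n) {t : ℕ}
    (hinv : ∀ m, ∀ b < 2*n, (() ∈ τ (Av n b) (t+m) ↔ (m % LL n).testBit b = true))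
    (hg : (GRules n).Sat (Δc τ t) Set.univ) :
    ∀ j r, r < LL n →
      (() ∈ τ (Gv n) (t + j*LL n + r) ↔ ∀ r' < r, () ∈ τ (Cv n) (t + j*LL n + r')) := by
  have hL : 0 < LL n := LL_pos hn
  rw [GRules, Sat_and] at hg
  obtain ⟨hg1, hg2⟩ := hg
  rw [Sat_G_c] at hg1
  rw [Sat_G_c] at hg2
  intro j r
  induction r with
  | zero =>
    intro _
    have h1 := hg1 (j * LL n)
    rw [Sat_imp] at h1
    have hb : (bstart n).Sat (Δc τ (t + j*LL n)) Set.univ := by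
      rw [bstart]
      exact (addrEq_char hn hinv hL).mpr (Nat.mul_mod_left _ _)
    have hgb := h1 hb
    constructor
    · intro _ r' hr'; exact absurd hr' (by omega)
    · intro _
      rw [show t + j*LL n + 0 = t + j*LL n from by omega]
      exact hgb
  | succ r ih =>
    intro hr
    have hr' : r < LL n := by omega
    have h2 := hg2 (j * LL n + r)
    rw [Sat_imp] at h2
    have hnb : (fneg (fX (bstart n))).Sat (Δc τ (t + (j*LL n + r))) Set.univ := by
      rw [Sat_neg, Sat_X_c, bstart]
      intro hcon
      rw [show t + (j*LL n + r) + 1 = t + (j*LL n + (r+1)) from by omega] at hcon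
      have := (addrEq_char hn hinv hL).mp hcon
      rw [jLr_mod hr] at this
      omega
    have h3 := h2 hnb
    rw [Sat_iff, Sat_X_c, Sat_and] at h3
    simp only [Sat_P_c] at h3
    rw [show t + (j*LL n + r) + 1 = t + j*LL n + (r+1) from by omega,
        show t + (j*LL n + r) = t + j*LL n + r from by omega] at h3
    rw [h3, ih hr']
    constructor
    · rintro ⟨h4, h5⟩ r'' hr''
      rcases Nat.lt_or_ge r'' r with h|h
      · exact h4 r'' h
      · rw [show r'' = r from by omega]; exact h5
    · intro h4
      exact ⟨fun r'' hr'' => h4 r'' (by omega), h4 r (by omega)⟩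

lemma c_inv (hn : 2 ≤ n) {t : ℕ}
    (hzv : (ZeroVal n).Sat (Δc τ t) Set.univ)
    (hinv : ∀ m, ∀ b < 2*n, (() ∈ τ (Av n b) (t+m) ↔ (m % LL n).testBit b = true))
    (hgi : ∀ j r, r < LL n →
      (() ∈ τ (Gv n) (t + j*LL n + r) ↔ ∀ r' < r, () ∈ τ (Cv n) (t + j*LL n + r')))
    (hcross : ∀ m, (() ∈ τ (Cv n) (t+(m+LL n)) ↔
      ¬ (() ∈ τ (Cv n) (t+m) ↔ () ∈ τ (Gv n) (t+m)))) :
    ∀ j r, r < LL n → (() ∈ τ (Cv n) (t + j*LL n + r) ↔ ((j % 2^(LL n)).testBit r = true)) := by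
  have hL : 0 < LL n := LL_pos hn
  intro j
  induction j with
  | zero =>
    intro r hr
    rw [ZeroVal, Sat_and, Sat_X_c, Sat_U_c] at hzv
    obtain ⟨hz1, i, hbs, hpre⟩ := hzv
    have hbs' : (1+i) % LL n = 0 := by
      rw [bstart, show t+1+i = t+(1+i) from by omega] at hbs
      exact (addrEq_char hn hinv hL).mp hbs
    have hiL : LL n ≤ 1 + i := by
      by_contra hlt
      push_neg at hlt
      rw [Nat.mod_eq_of_lt hlt] at hbs'
      omega
    refine iff_of_false ?_ (by simp [Nat.zero_testBit])
    rcases Nat.eq_zero_or_pos r with hr0|hr0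
    · rw [hr0, show t + 0*LL n + 0 = t from by omega]
      exact Sat_neg.mp hz1
    · have := hpre (r-1) (by omega)
      rw [Sat_neg] at this
      rw [show t + 0*LL n + r = t+1+(r-1) from by omega]
      exact this
  | succ j ih =>
    intro r hr
    rw [show t + (j+1)*LL n + r = t + ((j*LL n + r) + LL n) from by
      have h : (j+1) * LL n = j * LL n + LL n := by ring
      omega]
    rw [hcross (j*LL n + r)]
    rw [show t + (j*LL n + r) = t + j*LL n + r from by omega]
    rw [ih r hr]
    have hgb : () ∈ τ (Gv n) (t+j*LL n+r) ↔ ((j % 2^(LL n)) % 2^r = 2^r - 1) := by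
      rw [hgi j r hr, ← lowOnes_iff]
      constructor
      · intro h r' hr'; exact (ih r' (by omega)).mp (h r' hr')
      · intro h r' hr'; exact (ih r' (by omega)).mpr (h r' hr')
    rw [hgb]
    have h1 : (1 : ℕ) % 2^(LL n) = 1 := by
      have : (2:ℕ)^1 ≤ 2^(LL n) := Nat.pow_le_pow_right (by norm_num) hL
      exact Nat.mod_eq_of_lt (by omega)
    have hstep : ((j+1) % 2^(LL n)).testBit r = ((j % 2^(LL n)) + 1).testBit r := by
      conv_lhs => rw [Nat.add_mod, h1]
      rw [Nat.testBit_mod_two_pow]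
      simp [hr]
    rw [hstep, testBit_succ_eq]
    cases hb1 : (j % 2^(LL n)).testBit r <;>
      by_cases hb2 : (j % 2^(LL n)) % 2^r = 2^r - 1 <;>
        simp [hb1, hb2]

lemma hasbit_extract (hn : 2 ≤ n) {t : ℕ}
    (hinv : ∀ m, ∀ b < 2*n, (() ∈ τ (Av n b) (t+m) ↔ (m % LL n).testBit b = true))
    {i : ℕ} (hiL : i % LL n = 0) (body : F)
    (hsat : (fX (fU (fneg (bstart n)) (fand (addr2n n) body))).Sat (Δc τ (t+i)) Set.univ) :
    body.Sat (Δc τ (t + i + 2^n)) Set.univ := by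
  have hL := LL_pos hn
  have h2L := pow2n_lt_LL hn
  have h2pos : 0 < 2^n := Nat.pow_pos (by norm_num)
  rw [show t + i = t + i from rfl] at hsat
  rw [Sat_X_c, Sat_U_c] at hsat
  obtain ⟨i2, hbody, hpre⟩ := hsat
  rw [Sat_and] at hbody
  have hmod : (1+i2) % LL n = 2^n := by
    have h1 := hbody.1
    rw [addr2n, show t+i+1+i2 = t+(i+(1+i2)) from by omega] at h1
    have h2 := (addrEq_char hn hinv h2L).mp h1
    rwa [Nat.add_mod, hiL, Nat.zero_add, Nat.mod_mod_of_dvd _ (dvd_refl _)] at h2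
  have h1i2 : 1 + i2 = 2^n := by
    by_contra hne
    have hge : LL n ≤ 1 + i2 := by
      by_contra hlt
      push_neg at hlt
      rw [Nat.mod_eq_of_lt hlt] at hmod
      omega
    have hgt : LL n < 1 + i2 := by
      rcases Nat.eq_or_lt_of_le hge with h|h
      · exfalso; rw [← h, Nat.mod_self] at hmod; omega
      · exact h
    have hk := hpre (LL n - 1) (by omega)
    rw [Sat_neg] at hk
    apply hk
    rw [bstart, show t+i+1+(LL n - 1) = t+(i+LL n) from by omega]
    refine (addrEq_char hn hinv hL).mpr ?_
    rw [Nat.add_mod_right]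
    exact hiL
  rw [show t+i+1+i2 = t + i + 2^n from by omega] at hbody
  exact hbody.2

lemma y_extract (hn : 2 ≤ n) {t : ℕ}
    (hinv : ∀ m, ∀ b < 2*n, (() ∈ τ (Av n b) (t+m) ↔ (m % LL n).testBit b = true))
    (hcinv : ∀ j r, r < LL n →
      (() ∈ τ (Cv n) (t + j*LL n + r) ↔ ((j % 2^(LL n)).testBit r = true)))
    (hy : (YRule n).Sat (Δc τ t) Set.univ) :
    () ∈ τ 1 (t + LL n * MM n) ∧ ∀ k < LL n * MM n, ¬ () ∈ τ 1 (t + k) := by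
  have hL := LL_pos hn
  have h2L := pow2n_lt_LL hn
  have hM2L : MM n < 2^(LL n) := MM_lt_pow hn
  rw [YRule, Sat_U_c] at hy
  obtain ⟨i, hbody, hpre⟩ := hy
  rw [Sat_and, Sat_and] at hbody
  obtain ⟨hbs, hhb, hy1⟩ := hbody
  have hiL : i % LL n = 0 := by
    rw [bstart] at hbs
    exact (addrEq_char hn hinv hL).mp hbs
  rw [HasBit] at hhb
  have hcb := hasbit_extract hn hinv hiL (P (Cv n)) hhb
  have hj := Nat.div_add_mod i (LL n)
  set j := i / LL n with hjdef
  have hij : i = LL n * j := by omega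
  have hcomm : j * LL n = LL n * j := Nat.mul_comm _ _
  have hcb' : ((j % 2^(LL n)).testBit (2^n)) = true := by
    have h2 := hcinv j (2^n) h2L
    rw [show t + j*LL n + 2^n = t + i + 2^n from by rw [hcomm, ← hij]] at h2
    exact h2.mp hcb
  have hno : ∀ j' < j, ((j' % 2^(LL n)).testBit (2^n)) = false := by
    intro j' hj'
    have hki : j' * LL n < i := by
      have h4 : j' * LL n < j * LL n := (Nat.mul_lt_mul_right hL).mpr hj'
      rw [hij, ← hcomm]
      exact h4
    have hk := hpre (j' * LL n) hki
    rw [Sat_and, Sat_imp] at hk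
    have hbs' : (bstart n).Sat (Δc τ (t + j'*LL n)) Set.univ := by
      rw [bstart]
      exact (addrEq_char hn hinv hL).mpr (Nat.mul_mod_left _ _)
    have hnb := hk.1 hbs'
    rw [NoBit] at hnb
    have hres := hasbit_extract hn hinv (Nat.mul_mod_left _ _) (fneg (P (Cv n))) hnb
    rw [Sat_neg] at hres
    have h2 := hcinv j' (2^n) h2L
    cases hb : (j' % 2^(LL n)).testBit (2^n)
    · rfl
    · exact absurd (h2.mpr hb) hres
  have hjM : j = MM n := by
    rcases lt_trichotomy j (MM n) with h|h|h
    · exfalso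
      have hjlt : j < 2^(LL n) := lt_trans h hM2L
      rw [Nat.mod_eq_of_lt hjlt] at hcb'
      have hfalse : j.testBit (2^n) = false := Nat.testBit_lt_two_pow h
      rw [hfalse] at hcb'
      exact absurd hcb' (by simp)
    · exact h
    · exfalso
      have hMno := hno (MM n) h
      rw [Nat.mod_eq_of_lt hM2L] at hMno
      rw [show (MM n).testBit (2^n) = true from Nat.testBit_two_pow_self] at hMno
      exact absurd hMno (by simp)
  constructor
  · rw [show t + LL n * MM n = t + i from by rw [hij, hjM]]
    exact hy1
  · intro k hk
    have hki : k < i := by rw [hij, hjM]; exact hk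
    have hkk := hpre k hki
    rw [Sat_and, Sat_neg] at hkk
    exact hkk.2

lemma sat_EOnce_iff {v : ℕ} :
    (EOnce v).Sat (Δc τ 0) Set.univ ↔ ∃! i, () ∈ τ v i := by
  rw [EOnce, Sat_U_c]
  constructor
  · rintro ⟨i, hbody, hpre⟩
    rw [Sat_and, Sat_X_c, Sat_G_c] at hbody
    obtain ⟨hmem, hafter⟩ := hbody
    refine ⟨0 + i, hmem, ?_⟩
    intro j hj
    rcases lt_trichotomy j (0+i) with h|h|h
    · exfalso
      have hh := hpre j (by omega)
      rw [Sat_neg] at hh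
      exact hh (Sat_P_c.mpr (by simpa using hj))
    · exact h
    · exfalso
      have hh := hafter (j - (0+i) - 1)
      rw [Sat_neg] at hh
      apply hh
      rw [show 0+i+1+(j-(0+i)-1) = j from by omega]
      exact hj
  · rintro ⟨i, hmem, huniq⟩
    refine ⟨i, ?_, ?_⟩
    · rw [Sat_and, Sat_X_c, Sat_G_c]
      refine ⟨Sat_P_c.mpr (by simpa using hmem), ?_⟩
      intro k
      rw [Sat_neg]
      intro hc
      have hc' : () ∈ τ v (0+i+1+k) := hc
      have := huniq _ hc'
      omega
    · intro k hk
      rw [Sat_neg]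
      intro hc
      have hc' : () ∈ τ v (0+k) := hc
      have := huniq _ hc'
      omega

theorem forward (hn : 2 ≤ n)
    (hsat : (matrixF n).Sat (Δc τ 0) Set.univ) :
    (∃! i, () ∈ τ 0 i) ∧ (∃! i, () ∈ τ 1 i) ∧
      ∀ i, (() ∈ τ 0 i ↔ () ∈ τ 1 (i + n * 2^n * 2^(2^n))) := by
  have hL := LL_pos hn
  rw [matrixF, Sat_bigAnd] at hsat
  have hx := (sat_EOnce_iff (v := 0)).mp (hsat (EOnce 0) (by simp))
  have hy' := (sat_EOnce_iff (v := 1)).mp (hsat (EOnce 1) (by simp))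
  have hreqSat := hsat (REq n) (by simp)
  rw [REq, Sat_bigAnd_range] at hreqSat
  have hreq : ∀ b < 2*n, ∀ j, (() ∈ τ (Rv b) j ↔ () ∈ τ (Av n 0) j) := by
    intro b hb j
    have h1 := hreqSat b hb
    rw [Sat_G_c] at h1
    have h2 := h1 j
    rw [Sat_iff] at h2
    simp only [Sat_P_c, Nat.zero_add] at h2
    exact h2
  have hanchor := hsat (Anchor n) (by simp)
  rw [Anchor, Sat_F_c] at hanchor
  obtain ⟨t0, hconj⟩ := hanchor
  rw [Sat_bigAnd] at hconj
  set t := 0 + t0 with ht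
  have hP0 : () ∈ τ 0 t := hconj (P 0) (by simp [AnchorList])
  have h0 := hconj (addrEq n 0) (by simp [AnchorList])
  have hAR := hconj (AddrRules n) (by simp [AnchorList])
  have hGR := hconj (GRules n) (by simp [AnchorList])
  have hZV := hconj (ZeroVal n) (by simp [AnchorList])
  have hPsi := hconj (Psi n (2*n)) (by simp [AnchorList])
  have hYR := hconj (YRule n) (by simp [AnchorList])
  have hinv := addr_inv hn h0 hAR
  have hgi := g_inv hn hinv hGR
  have hcross := cross_bits hn hreq hinv hPsi
  have hcinv := c_inv hn hZV hinv hgi hcross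
  have hyy := y_extract hn hinv hcinv hYR
  have hNe : n * 2^n * 2^(2^n) = LL n * MM n := rfl
  refine ⟨hx, hy', ?_⟩
  intro i
  obtain ⟨ix, hix, hux⟩ := hx
  obtain ⟨iy, hiy, huy⟩ := hy'
  have hxt : ix = t := (hux t hP0).symm
  have hyt : iy = t + LL n * MM n := (huy _ hyy.1).symm
  constructor
  · intro h
    have hi : i = ix := hux i h
    rw [hi, hxt, hNe]
    exact hyy.1
  · intro h
    have h2 : i + n*2^n*2^(2^n) = iy := huy _ h
    rw [hyt, hNe] at h2
    have h3 : i = t := by omega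
    rw [h3]
    exact hP0

end Analysis3

/-! ### Backward direction: construction of witness traces -/

def s0 (n i₀ : ℕ) : ℕ := LL n - i₀ % LL n
def pat (n i₀ i : ℕ) : ℕ := (i + s0 n i₀) % LL n
def jj (n i₀ i : ℕ) : ℕ := (i + s0 n i₀) / LL n
def jdx (n i₀ i : ℕ) : ℕ := jj n i₀ i - jj n i₀ i₀
def vvv (n i₀ i : ℕ) : ℕ := jdx n i₀ i % 2^(LL n)

noncomputable def tau (n i₀ : ℕ) (πx πy : Trace Unit) : ℕ → Trace Unit := fun v =>
  if v = 0 then πx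
  else if v = 1 then πy
  else if v < 2 + 2*n then (fun i => {_u | (pat n i₀ i).testBit 0 = true})
  else if v < 2 + 4*n then (fun i => {_u | (pat n i₀ i).testBit (v - (2+2*n)) = true})
  else if v = 2 + 4*n then (fun i => {_u | (vvv n i₀ i).testBit (pat n i₀ i) = true})
  else (fun i => {_u | vvv n i₀ i % 2^(pat n i₀ i) = 2^(pat n i₀ i) - 1})

section Backward

variable {n i₀ : ℕ} {πx πy : Trace Unit}

lemma tau_0 : tau n i₀ πx πy 0 = πx := by unfold tau; rw [if_pos rfl]

lemma tau_1 : tau n i₀ πx πy 1 = πy := by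
  unfold tau; rw [if_neg (by omega), if_pos rfl]

lemma mem_R {b : ℕ} (hb : b < 2*n) (i : ℕ) :
    () ∈ tau n i₀ πx πy (Rv b) i ↔ (pat n i₀ i).testBit 0 = true := by
  unfold tau Rv
  rw [if_neg (by omega), if_neg (by omega), if_pos (by omega)]
  exact Iff.rfl

lemma mem_A {b : ℕ} (hb : b < 2*n) (i : ℕ) :
    () ∈ tau n i₀ πx πy (Av n b) i ↔ (pat n i₀ i).testBit b = true := by
  unfold tau Av
  rw [if_neg (by omega), if_neg (by omega), if_neg (by omega), if_pos (by omega)]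
  have e : 2 + 2*n + b - (2+2*n) = b := by omega
  rw [show (() ∈ {_u : Unit | (pat n i₀ i).testBit (2+2*n+b - (2+2*n)) = true}) =
    ((pat n i₀ i).testBit (2+2*n+b-(2+2*n)) = true) from rfl, e]

lemma mem_C (i : ℕ) :
    () ∈ tau n i₀ πx πy (Cv n) i ↔ (vvv n i₀ i).testBit (pat n i₀ i) = true := by
  unfold tau Cv
  rw [if_neg (by omega), if_neg (by omega), if_neg (by omega), if_neg (by omega),
    if_pos rfl]
  exact Iff.rfl

lemma mem_G (i : ℕ) :
    () ∈ tau n i₀ πx πy (Gv n) i ↔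
      vvv n i₀ i % 2^(pat n i₀ i) = 2^(pat n i₀ i) - 1 := by
  unfold tau Gv
  rw [if_neg (by omega), if_neg (by omega), if_neg (by omega), if_neg (by omega),
    if_neg (by omega)]
  exact Iff.rfl

lemma s0_spec (hn : 2 ≤ n) : (i₀ + s0 n i₀) % LL n = 0 := by
  have hL := LL_pos hn
  have h1 := Nat.div_add_mod i₀ (LL n)
  have h2 : i₀ % LL n < LL n := Nat.mod_lt _ hL
  have h3 : i₀ + s0 n i₀ = LL n * (i₀ / LL n) + LL n := by unfold s0; omega
  have h4 : LL n * (i₀ / LL n) + LL n = LL n * (i₀ / LL n + 1) := by ring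
  rw [h3, h4, Nat.mul_mod_right]

lemma pat_at (hn : 2 ≤ n) (m : ℕ) : pat n i₀ (i₀ + m) = m % LL n := by
  unfold pat
  rw [show i₀ + m + s0 n i₀ = (i₀ + s0 n i₀) + m from by omega]
  rw [Nat.add_mod, s0_spec hn, Nat.zero_add, Nat.mod_mod_of_dvd _ (dvd_refl _)]

lemma jdx_at (hn : 2 ≤ n) (m : ℕ) : jdx n i₀ (i₀ + m) = m / LL n := by
  have hL := LL_pos hn
  have hs := s0_spec hn (i₀ := i₀)
  have h1 := Nat.div_add_mod (i₀ + s0 n i₀) (LL n)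
  have h2 : i₀ + s0 n i₀ = LL n * ((i₀ + s0 n i₀) / LL n) := by omega
  unfold jdx jj
  rw [show i₀ + m + s0 n i₀ = LL n * ((i₀ + s0 n i₀)/LL n) + m from by omega]
  rw [Nat.mul_add_div hL]
  exact Nat.add_sub_cancel_left _ _

lemma vvv_at (hn : 2 ≤ n) (m : ℕ) : vvv n i₀ (i₀ + m) = (m / LL n) % 2^(LL n) := by
  unfold vvv; rw [jdx_at hn]

lemma succ_divmod {m L : ℕ} (hL : 0 < L) (h : m % L ≠ L - 1) :
    (m+1) / L = m / L ∧ (m+1) % L = m % L + 1 := by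
  have h1 := Nat.div_add_mod m L
  have h2 : m % L < L := Nat.mod_lt _ hL
  have h3 : m + 1 = L * (m/L) + (m % L + 1) := by omega
  constructor
  · rw [h3, Nat.mul_add_div hL,
      show (m % L + 1) / L = 0 from Nat.div_eq_of_lt (by omega)]
    omega
  · rw [h3, Nat.mul_add_mod]
    exact Nat.mod_eq_of_lt (by omega)

lemma succ_mod_zero {m L : ℕ} (hL : 0 < L) (h : m % L = L - 1) :
    (m+1) % L = 0 ∧ (m+1)/L = m/L + 1 := by
  have h1 := Nat.div_add_mod m L
  have h3 : m + 1 = L * (m/L) + L := by omega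
  have h4 : m+1 = L * (m/L + 1) := by rw [h3]; ring
  constructor
  · rw [h4, Nat.mul_mod_right]
  · rw [h4, Nat.mul_div_cancel_left _ hL]

lemma addL_divmod {m L : ℕ} (hL : 0 < L) : (m+L)/L = m/L + 1 ∧ (m+L)%L = m%L :=
  ⟨Nat.add_div_right m hL, Nat.add_mod_right m L⟩

lemma mulL_divmod {q r L : ℕ} (hL : 0 < L) (hr : r < L) :
    (L*q + r)/L = q ∧ (L*q+r)%L = r := by
  constructor
  · rw [Nat.mul_add_div hL, show r / L = 0 from Nat.div_eq_of_lt hr]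
    omega
  · rw [Nat.mul_add_mod]
    exact Nat.mod_eq_of_lt hr

lemma tau_hinv (hn : 2 ≤ n) : ∀ m, ∀ b < 2*n,
    (() ∈ tau n i₀ πx πy (Av n b) (i₀+m) ↔ (m % LL n).testBit b = true) := by
  intro m b hb
  rw [mem_A hb, pat_at hn]

lemma tau_hreq (hn : 2 ≤ n) : ∀ b < 2*n, ∀ j,
    (() ∈ tau n i₀ πx πy (Rv b) j ↔ () ∈ tau n i₀ πx πy (Av n 0) j) := by
  intro b hb j
  rw [mem_R hb, mem_A (by omega)]

lemma bwd_addr (hn : 2 ≤ n) :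
    (AddrRules n).Sat (Δc (tau n i₀ πx πy) i₀) Set.univ := by
  have hL := LL_pos hn
  have hinv := tau_hinv (πx := πx) (πy := πy) (i₀ := i₀) hn
  rw [AddrRules, Sat_G_c]
  intro m
  rw [Sat_and, Sat_imp, Sat_imp]
  have hWc : (Wf n).Sat (Δc (tau n i₀ πx πy) (i₀+m)) Set.univ ↔ m % LL n = LL n - 1 := by
    rw [Wf]; exact addrEq_char hn hinv (by omega)
  constructor
  · intro hW
    rw [Sat_X_c]
    have h0 := (succ_mod_zero hL (hWc.mp hW)).1
    rw [show i₀ + m + 1 = i₀ + (m+1) from by omega, bstart]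
    exact (addrEq_char hn hinv hL).mpr h0
  · intro hnW
    rw [Sat_neg, hWc] at hnW
    obtain ⟨hdiv, hmod⟩ := succ_divmod hL hnW
    rw [IncA, Sat_bigAnd_range]
    intro b hb
    rw [Sat_iff, Sat_X_c, Sat_xor]
    simp only [Sat_P_c]
    rw [show i₀ + m + 1 = i₀ + (m+1) from by omega]
    rw [hinv (m+1) b hb, hinv m b hb]
    have hlowc : (lowAnd n b).Sat (Δc (tau n i₀ πx πy) (i₀+m)) Set.univ ↔
        (m % LL n) % 2^b = 2^b - 1 := by
      rw [sat_lowAnd, ← lowOnes_iff]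
      constructor
      · intro h b' hb'; exact (hinv m b' (by omega)).mp (h b' hb')
      · intro h b' hb'; exact (hinv m b' (by omega)).mpr (h b' hb')
    rw [hlowc, hmod, testBit_succ_eq]
    cases h2 : (m % LL n).testBit b <;>
      by_cases h3 : (m % LL n) % 2^b = 2^b - 1 <;> simp [h2, h3]

lemma bwd_g (hn : 2 ≤ n) :
    (GRules n).Sat (Δc (tau n i₀ πx πy) i₀) Set.univ := by
  have hL := LL_pos hn
  have hinv := tau_hinv (πx := πx) (πy := πy) (i₀ := i₀) hn
  rw [GRules, Sat_and]
  constructor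
  · rw [Sat_G_c]
    intro m
    rw [Sat_imp]
    intro hbs
    rw [bstart] at hbs
    have hm0 : m % LL n = 0 := (addrEq_char hn hinv hL).mp hbs
    show () ∈ tau n i₀ πx πy (Gv n) (i₀+m)
    rw [mem_G, pat_at hn, hm0]
    simp [Nat.mod_one]
  · rw [Sat_G_c]
    intro m
    rw [Sat_imp]
    intro hnb
    rw [Sat_neg, Sat_X_c, show i₀ + m + 1 = i₀ + (m+1) from by omega, bstart] at hnb
    have hm1 : (m+1) % LL n ≠ 0 := fun h => hnb ((addrEq_char hn hinv hL).mpr h)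
    have hmne : m % LL n ≠ LL n - 1 := fun h => hm1 (succ_mod_zero hL h).1
    obtain ⟨hdiv, hmod⟩ := succ_divmod hL hmne
    rw [Sat_iff, Sat_X_c, Sat_and]
    simp only [Sat_P_c]
    rw [show i₀ + m + 1 = i₀ + (m+1) from by omega]
    rw [mem_G (i := i₀ + (m+1)), mem_G (i := i₀ + m), mem_C (i := i₀ + m)]
    rw [pat_at hn, pat_at hn, vvv_at hn, vvv_at hn]
    rw [hdiv, hmod]
    exact lowOnes_succ _ _

lemma bwd_zero (hn : 2 ≤ n) :
    (ZeroVal n).Sat (Δc (tau n i₀ πx πy) i₀) Set.univ := by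
  have hL := LL_pos hn
  have hinv := tau_hinv (πx := πx) (πy := πy) (i₀ := i₀) hn
  rw [ZeroVal, Sat_and]
  constructor
  · rw [Sat_neg]
    intro h
    have h2 : () ∈ tau n i₀ πx πy (Cv n) (i₀ + 0) := by
      rw [show i₀ + 0 = i₀ from by omega]; exact h
    rw [mem_C, pat_at hn, vvv_at hn] at h2
    rw [Nat.zero_div, Nat.zero_mod, Nat.zero_testBit] at h2
    exact absurd h2 (by simp)
  · rw [Sat_X_c, Sat_U_c]
    refine ⟨LL n - 1, ?_, ?_⟩
    · rw [show i₀ + 1 + (LL n - 1) = i₀ + LL n from by omega, bstart]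
      exact (addrEq_char hn hinv hL).mpr (Nat.mod_self _)
    · intro k hk
      rw [Sat_neg]
      intro hcon
      have h2 : () ∈ tau n i₀ πx πy (Cv n) (i₀+(1+k)) := by
        rw [show i₀+(1+k) = i₀+1+k from by omega]; exact hcon
      rw [mem_C, pat_at hn, vvv_at hn] at h2
      rw [Nat.div_eq_of_lt (by omega), Nat.zero_mod, Nat.zero_testBit] at h2
      exact absurd h2 (by simp)

lemma bwd_core (hn : 2 ≤ n) (d : ℕ → Bool) :
    (CrossRule n).Sat (Δat (tau n i₀ πx πy) (fun v => i₀ + rsh n d v)) Set.univ := by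
  have hL := LL_pos hn
  have hLle : LL n ≤ 2^(2*n) := LL_le_pow
  have hinv := tau_hinv (πx := πx) (πy := πy) (i₀ := i₀) hn
  have hreq := tau_hreq (πx := πx) (πy := πy) (i₀ := i₀) hn
  simp only [CrossRule, Sat_G_univ]
  intro m
  rw [Sat_imp]
  intro hmatch
  have hdm := (match_char hn hreq hinv d m).mp hmatch
  rw [Sat_and, Sat_imp, Sat_imp]
  have hCv0 : rsh n d (Cv n) = 0 := rsh_eq_zero d (Or.inr (by unfold Cv; omega))
  have hGv0 : rsh n d (Gv n) = 0 := rsh_eq_zero d (Or.inr (by unfold Gv; omega))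
  have hcm : () ∈ tau n i₀ πx πy (Cv n) (i₀+m) ↔
      ((m / LL n) % 2^(LL n)).testBit (m % LL n) = true := by
    rw [mem_C, pat_at hn, vvv_at hn]
  have hgmm : () ∈ tau n i₀ πx πy (Gv n) (i₀+m) ↔
      ((m / LL n) % 2^(LL n)) % 2^(m % LL n) = 2^(m % LL n) - 1 := by
    rw [mem_G, pat_at hn, vvv_at hn]
  have hcL : () ∈ tau n i₀ πx πy (Cv n) (i₀+(m+LL n)) ↔
      (((m / LL n) % 2^(LL n)) + 1).testBit (m % LL n) = true := by
    rw [mem_C, pat_at hn, vvv_at hn]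
    rw [(addL_divmod hL).1, (addL_divmod hL).2]
    rw [Nat.add_mod (m / LL n) 1]
    rw [Nat.mod_eq_of_lt (show (1:ℕ) < 2^(LL n) from by
      have : (2:ℕ)^1 ≤ 2^(LL n) := Nat.pow_le_pow_right (by norm_num) hL
      omega)]
    rw [Nat.testBit_mod_two_pow]
    simp [Nat.mod_lt m hL]
  have main : ∀ (body : F),
      body.Sat (Δat (tau n i₀ πx πy) (fun v => i₀ + rsh n d v + (m + LL n))) Set.univ →
      (fX (fU (fneg (MatchF n)) (fand (MatchF n) body))).Sat
        (Δat (tau n i₀ πx πy) (fun v => i₀ + rsh n d v + m)) Set.univ := by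
    intro body hbody
    simp only [Sat_X_univ, Sat_U_univ]
    refine ⟨LL n - 1, ?_, ?_⟩
    · rw [show (fun v => i₀ + rsh n d v + m + 1 + (LL n - 1)) =
        (fun v => i₀ + rsh n d v + (m + LL n)) from funext fun v => by omega]
      rw [Sat_and]
      refine ⟨?_, hbody⟩
      refine (match_char hn hreq hinv d (m + LL n)).mpr ?_
      intro b hb
      rw [Nat.add_mod_right]
      exact hdm b hb
    · intro k hk
      rw [show (fun v => i₀ + rsh n d v + m + 1 + k) =
        (fun v => i₀ + rsh n d v + (m+1+k)) from funext fun v => by omega]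
      rw [Sat_neg]
      intro hcon
      have h2 := (match_char hn hreq hinv d (m+1+k)).mp hcon
      have heq : (m+1+k) % LL n = m % LL n := by
        refine bitEqBelow (m := 2*n) (lt_of_lt_of_le (Nat.mod_lt _ hL) hLle)
          (lt_of_lt_of_le (Nat.mod_lt _ hL) hLle) ?_
        intro b hb
        have e1 := (hdm b hb).symm.trans (h2 b hb)
        cases hx1 : ((m+1+k) % LL n).testBit b <;>
          cases hx2 : (m % LL n).testBit b <;> simp [hx1, hx2] at e1 ⊢
      obtain ⟨qq, hqq⟩ := mod_eq_of_modEq hL (by omega) heq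
      rcases Nat.eq_zero_or_pos qq with h0|h0
      · rw [h0, Nat.mul_zero] at hqq; omega
      · have h5 : LL n * 1 ≤ LL n * qq := Nat.mul_le_mul_left _ h0
        omega
  constructor
  · intro hdvg
    have hdvg' : ¬ (() ∈ tau n i₀ πx πy (Cv n) (i₀+m) ↔
        () ∈ tau n i₀ πx πy (Gv n) (i₀+m)) := by
      rw [dvg, Sat_xor] at hdvg
      simp only [Sat_P] at hdvg
      rwa [show i₀ + rsh n d (Cv n) + m = i₀ + m from by rw [hCv0]; omega,
        show i₀ + rsh n d (Gv n) + m = i₀ + m from by rw [hGv0]; omega] at hdvg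
    rw [NextC]
    apply main
    show () ∈ tau n i₀ πx πy (Cv n) (i₀ + rsh n d (Cv n) + (m + LL n))
    rw [show i₀ + rsh n d (Cv n) + (m + LL n) = i₀ + (m + LL n) from by rw [hCv0]; omega]
    rw [hcL, testBit_succ_eq]
    rw [hcm, hgmm] at hdvg'
    cases hb1 : ((m / LL n) % 2^(LL n)).testBit (m % LL n) <;>
      by_cases hb2 : ((m / LL n) % 2^(LL n)) % 2^(m % LL n) = 2^(m % LL n) - 1 <;>
        simp [hb1, hb2] at hdvg' ⊢ <;> tauto
  · intro hndvg
    have hdvg' : (() ∈ tau n i₀ πx πy (Cv n) (i₀+m) ↔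
        () ∈ tau n i₀ πx πy (Gv n) (i₀+m)) := by
      rw [Sat_neg, dvg, Sat_xor] at hndvg
      simp only [Sat_P] at hndvg
      rw [show i₀ + rsh n d (Cv n) + m = i₀ + m from by rw [hCv0]; omega,
        show i₀ + rsh n d (Gv n) + m = i₀ + m from by rw [hGv0]; omega] at hndvg
      tauto
    rw [NextNC]
    apply main
    rw [Sat_neg]
    show ¬ () ∈ tau n i₀ πx πy (Cv n) (i₀ + rsh n d (Cv n) + (m + LL n))
    rw [show i₀ + rsh n d (Cv n) + (m + LL n) = i₀ + (m + LL n) from by rw [hCv0]; omega]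
    rw [hcL, testBit_succ_eq]
    rw [hcm, hgmm] at hdvg'
    cases hb1 : ((m / LL n) % 2^(LL n)).testBit (m % LL n) <;>
      by_cases hb2 : ((m / LL n) % 2^(LL n)) % 2^(m % LL n) = 2^(m % LL n) - 1 <;>
        simp [hb1, hb2] at hdvg' ⊢ <;> tauto

lemma bwd_psi (hn : 2 ≤ n) :
    ∀ b, b ≤ 2*n → ∀ (d : ℕ → Bool) (C : Set ℕ), (∀ b' < b, d b' = false) →
      (Psi n b).Sat (Δat (tau n i₀ πx πy) (fun v => i₀ + rsh n d v)) C := by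
  intro b
  induction b with
  | zero =>
    intro _ d C _
    exact bwd_core hn d
  | succ b ih =>
    intro hb d C hd
    have hblt : b < 2*n := by omega
    refine Sat_and.mpr ⟨?_, ih (by omega) d C (fun b' hb' => hd b' (by omega))⟩
    show (Psi n b).Sat (shiftA (Δat (tau n i₀ πx πy) (fun v => i₀ + rsh n d v)) {Rv b} 1) {Rv b}
    have hdb : d b = false := hd b (by omega)
    have hEq : shiftA (Δat (tau n i₀ πx πy) (fun v => i₀ + rsh n d v)) {Rv b} 1
        = Δat (tau n i₀ πx πy) (fun v => i₀ + rsh n (fun b'' => if b'' = b then true else d b'') v) := by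
      funext v
      by_cases hv : v = Rv b
      · subst hv
        have hA : Rv b ∈ ({Rv b} : Set ℕ) := rfl
        unfold shiftA
        rw [if_pos hA]
        have e1 : rsh n d (Rv b) = 0 := by rw [rsh_Rv hblt]; simp [hdb]
        have e2 : rsh n (fun b'' => if b'' = b then true else d b'') (Rv b) = 1 := by
          rw [rsh_Rv hblt]; simp
        simp only [Δat]
        rw [e1, e2]
      · have hA : v ∉ ({Rv b} : Set ℕ) := hv
        unfold shiftA
        rw [if_neg hA]
        have e1 : rsh n (fun b'' => if b'' = b then true else d b'') v = rsh n d v := by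
          unfold rsh
          by_cases h2v : 2 ≤ v ∧ v < 2 + 2*n
          · have hne : v - 2 ≠ b := by unfold Rv at hv; omega
            simp [hne]
          · have hc1 : ¬ (2 ≤ v ∧ v < 2 + 2*n ∧ (if v - 2 = b then true else d (v-2)) = true) := by
              intro hc; exact h2v ⟨hc.1, hc.2.1⟩
            have hc2 : ¬ (2 ≤ v ∧ v < 2 + 2*n ∧ d (v-2) = true) := by
              intro hc; exact h2v ⟨hc.1, hc.2.1⟩
            simp only [hc1, hc2, if_false]
        simp only [Δat]
        rw [e1]
    rw [hEq]
    exact ih (by omega) _ _ (fun b' hb' => by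
      have hne : b' ≠ b := by omega
      simp [hne]
      exact hd b' (by omega))

lemma bwd_y (hn : 2 ≤ n)
    (hymem : ∀ i, (() ∈ πy i ↔ i = i₀ + LL n * MM n)) :
    (YRule n).Sat (Δc (tau n i₀ πx πy) i₀) Set.univ := by
  have hL := LL_pos hn
  have h2L := pow2n_lt_LL hn
  have hM2L := MM_lt_pow hn
  have h2pos : (0:ℕ) < 2^n := Nat.pow_pos (by norm_num)
  have hinv := tau_hinv (πx := πx) (πy := πy) (i₀ := i₀) hn
  rw [YRule, Sat_U_c]
  refine ⟨LL n * MM n, ?_, ?_⟩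
  · rw [Sat_and, Sat_and]
    refine ⟨?_, ?_, ?_⟩
    · rw [bstart]
      exact (addrEq_char hn hinv hL).mpr (Nat.mul_mod_right _ _)
    · rw [HasBit, Sat_X_c, Sat_U_c]
      refine ⟨2^n - 1, ?_, ?_⟩
      · rw [show i₀ + (LL n * MM n) + 1 + (2^n - 1) = i₀ + (LL n * MM n + 2^n) from by omega]
        rw [Sat_and]
        constructor
        · rw [addr2n]
          exact (addrEq_char hn hinv h2L).mpr (mulL_divmod hL h2L).2
        · show () ∈ tau n i₀ πx πy (Cv n) (i₀ + (LL n * MM n + 2^n))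
          rw [mem_C, pat_at hn, vvv_at hn]
          rw [(mulL_divmod hL h2L).1, (mulL_divmod hL h2L).2]
          rw [Nat.mod_eq_of_lt hM2L]
          exact Nat.testBit_two_pow_self
      · intro k hk
        rw [Sat_neg]
        rw [show i₀ + (LL n * MM n) + 1 + k = i₀ + (LL n * MM n + (1+k)) from by omega, bstart]
        intro hcon
        have h3 := (addrEq_char hn hinv hL).mp hcon
        rw [(mulL_divmod hL (show 1+k < LL n from by omega)).2] at h3
        omega
    · show () ∈ tau n i₀ πx πy 1 (i₀ + LL n * MM n)
      rw [tau_1]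
      exact (hymem _).mpr rfl
  · intro k hk
    rw [Sat_and]
    constructor
    · rw [Sat_imp]
      intro hbs
      rw [bstart] at hbs
      have hk0 := (addrEq_char hn hinv hL).mp hbs
      have hkk : k = LL n * (k / LL n) := by
        have := Nat.div_add_mod k (LL n); omega
      rw [NoBit, Sat_X_c, Sat_U_c]
      refine ⟨2^n - 1, ?_, ?_⟩
      · rw [show i₀ + k + 1 + (2^n - 1) = i₀ + (k + 2^n) from by omega]
        rw [Sat_and]
        constructor
        · rw [addr2n]
          refine (addrEq_char hn hinv h2L).mpr ?_
          rw [show k + 2^n = LL n * (k/LL n) + 2^n from by omega]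
          exact (mulL_divmod hL h2L).2
        · rw [Sat_neg]
          show ¬ () ∈ tau n i₀ πx πy (Cv n) (i₀ + (k + 2^n))
          rw [mem_C, pat_at hn, vvv_at hn]
          rw [show k + 2^n = LL n * (k/LL n) + 2^n from by omega]
          rw [(mulL_divmod hL h2L).1, (mulL_divmod hL h2L).2]
          have hjlt : k / LL n < MM n := by
            have h6 : k < MM n * LL n := by rw [Nat.mul_comm]; exact hk
            exact (Nat.div_lt_iff_lt_mul hL).mpr h6
          rw [Nat.mod_eq_of_lt (lt_trans hjlt hM2L)]
          intro hcon
          have h7 : (k / LL n).testBit (2^n) = false := Nat.testBit_lt_two_pow hjlt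
          rw [h7] at hcon
          exact absurd hcon (by simp)
      · intro k2 hk2
        rw [Sat_neg]
        rw [show i₀ + k + 1 + k2 = i₀ + (k + (1+k2)) from by omega, bstart]
        intro hcon
        have h3 := (addrEq_char hn hinv hL).mp hcon
        rw [show k + (1+k2) = LL n * (k/LL n) + (1+k2) from by omega] at h3
        rw [(mulL_divmod hL (show 1+k2 < LL n from by omega)).2] at h3
        omega
    · rw [Sat_neg]
      show ¬ () ∈ tau n i₀ πx πy 1 (i₀ + k)
      rw [tau_1, hymem]
      omega

theorem backward (hn : 2 ≤ n)
    (hxmem : ∀ i, (() ∈ πx i ↔ i = i₀))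
    (hymem : ∀ i, (() ∈ πy i ↔ i = i₀ + LL n * MM n)) :
    (matrixF n).Sat (Δc (tau n i₀ πx πy) 0) Set.univ := by
  have hL := LL_pos hn
  rw [matrixF, Sat_bigAnd]
  intro a ha
  simp only [List.mem_cons, List.not_mem_nil, or_false] at ha
  rcases ha with rfl|rfl|rfl|rfl
  · refine (sat_EOnce_iff (v := 0)).mpr ?_
    rw [tau_0]
    exact ⟨i₀, (hxmem i₀).mpr rfl, fun j hj => (hxmem j).mp hj⟩
  · refine (sat_EOnce_iff (v := 1)).mpr ?_
    rw [tau_1]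
    exact ⟨i₀ + LL n * MM n, (hymem _).mpr rfl, fun j hj => (hymem j).mp hj⟩
  · rw [REq, Sat_bigAnd_range]
    intro b hb
    rw [Sat_G_c]
    intro j
    rw [Sat_iff]
    simp only [Sat_P_c]
    rw [mem_R hb, mem_A (by omega)]
  · rw [Anchor, Sat_F_c]
    refine ⟨i₀, ?_⟩
    rw [show (0:ℕ) + i₀ = i₀ from by omega]
    rw [Sat_bigAnd]
    intro a ha
    simp only [AnchorList, List.mem_cons, List.not_mem_nil, or_false] at ha
    rcases ha with rfl|rfl|rfl|rfl|rfl|rfl|rfl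
    · show () ∈ tau n i₀ πx πy 0 i₀
      rw [tau_0]
      exact (hxmem i₀).mpr rfl
    · have h := (addrEq_char (m := 0) hn (tau_hinv (πx := πx) (πy := πy) (i₀ := i₀) hn) hL).mpr
        (Nat.zero_mod _)
      exact h
    · exact bwd_zero hn
    · exact bwd_addr hn
    · exact bwd_g hn
    · have h := bwd_psi (πx := πx) (πy := πy) (i₀ := i₀) hn (2*n) le_rfl (fun _ => false) Set.univ
        (fun _ _ => rfl)
      have hEq : (fun v => i₀ + rsh n (fun _ => false) v) = (fun _ : ℕ => i₀) := by
        funext v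
        rw [show rsh n (fun _ => false) v = 0 from by unfold rsh; simp]
        omega
      rw [hEq] at h
      exact h
    · exact bwd_y hn hymem

end Backward

/-! ### Congruence of satisfaction w.r.t. relevant variables -/

lemma shiftA_congr {Δ Δ' : PTA Unit ℕ} {C : Set ℕ} {i : ℕ} {v : ℕ} (h : Δ v = Δ' v) :
    shiftA Δ C i v = shiftA Δ' C i v := by
  unfold shiftA
  split_ifs <;> rw [h]

lemma sat_congr : ∀ (φ : F) (Δ Δ' : PTA Unit ℕ) (C : Set ℕ),
    (∀ v ∈ φ.vars, Δ v = Δ' v) → (φ.Sat Δ C ↔ φ.Sat Δ' C) := by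
  intro φ
  induction φ with
  | tt => intro Δ Δ' C _; exact Iff.rfl
  | atom p x =>
    intro Δ Δ' C h
    have hx := h x rfl
    show p ∈ (Δ x).1 (Δ x).2 ↔ p ∈ (Δ' x).1 (Δ' x).2
    rw [hx]
  | neg ψ ih =>
    intro Δ Δ' C h
    exact not_congr (ih Δ Δ' C h)
  | conj a b iha ihb =>
    intro Δ Δ' C h
    exact and_congr (iha Δ Δ' C fun v hv => h v (Set.mem_union_left _ hv))
      (ihb Δ Δ' C fun v hv => h v (Set.mem_union_right _ hv))
  | next ψ ih =>
    intro Δ Δ' C h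
    exact ih _ _ C fun v hv => shiftA_congr (h v hv)
  | untl a b iha ihb =>
    intro Δ Δ' C h
    refine exists_congr fun i => and_congr ?_ ?_
    · exact ihb _ _ C fun v hv => shiftA_congr (h v (Set.mem_union_right _ hv))
    · refine forall_congr' fun k => forall_congr' fun _ => ?_
      exact iha _ _ C fun v hv => shiftA_congr (h v (Set.mem_union_left _ hv))
  | ctx D hD ψ ih =>
    intro Δ Δ' C h
    exact ih Δ Δ' D h

/-! ### Variable sets -/

lemma mem_vars_bigAnd {l : List F} {v : ℕ} :
    v ∈ (bigAnd l).vars ↔ ∃ a ∈ l, v ∈ a.vars := by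
  induction l with
  | nil =>
    simp [bigAnd, HCQF.vars]
  | cons a l ih =>
    show v ∈ a.vars ∪ (bigAnd l).vars ↔ _
    simp [Set.mem_union, ih]

lemma vars_addrEq {n K v : ℕ} (hv : v ∈ (addrEq n K).vars) : ∃ b < 2*n, v = Av n b := by
  rw [addrEq, mem_vars_bigAnd] at hv
  obtain ⟨a, ha, hva⟩ := hv
  simp only [List.mem_map, List.mem_range] at ha
  obtain ⟨b, hb, rfl⟩ := ha
  refine ⟨b, hb, ?_⟩
  split_ifs at hva
  · exact hva
  · exact hva

lemma vars_MatchF {n v : ℕ} (hv : v ∈ (MatchF n).vars) :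
    (∃ b < 2*n, v = Rv b) ∨ v = Av n 0 ∨ (∃ b < 2*n, v = Av n b) := by
  rw [MatchF, mem_vars_bigAnd] at hv
  obtain ⟨a, ha, hva⟩ := hv
  simp only [List.mem_map, List.mem_range] at ha
  obtain ⟨b, hb, rfl⟩ := ha
  simp only [readBit, fiff, fimp, f_or, fxor, fand, fneg, P, HCQF.vars,
    Set.mem_union, Set.mem_singleton_iff] at hva
  have h3 : v = Rv b ∨ v = Av n 0 ∨ v = Av n b := by tauto
  rcases h3 with h|h|h
  · exact Or.inl ⟨b, hb, h⟩
  · exact Or.inr (Or.inl h)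
  · exact Or.inr (Or.inr ⟨b, hb, h⟩)

lemma vars_CrossRule' {n : ℕ} :
    (CrossRule n).vars ⊆ (MatchF n).vars ∪ {Cv n, Gv n} := by
  intro v hv
  simp only [CrossRule, NextC, NextNC, dvg, fG, fU, fiff, fimp, f_or, fxor, fand, fneg,
    fX, P, HCQF.vars, Set.mem_union, Set.mem_singleton_iff, Set.mem_empty_iff_false,
    false_or, or_false] at hv
  simp only [Set.mem_union, Set.mem_insert_iff, Set.mem_singleton_iff]
  tauto

lemma vars_Psi {n b v : ℕ} (hv : v ∈ (Psi n b).vars) : v ∈ (CrossRule n).vars := by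
  induction b with
  | zero => exact hv
  | succ b ih =>
    rcases hv with h|h
    · exact ih h
    · exact ih h

set_option maxHeartbeats 2000000 in
lemma vars_lt {n : ℕ} (hn : 2 ≤ n) : ∀ v ∈ (matrixF n).vars, v < 4*n+4 := by
  have hRv : ∀ b, b < 2*n → Rv b < 4*n+4 := fun b hb => by unfold Rv; omega
  have hAv : ∀ b, b < 2*n → Av n b < 4*n+4 := fun b hb => by unfold Av; omega
  have hCv : Cv n < 4*n+4 := by unfold Cv; omega
  have hGv : Gv n < 4*n+4 := by unfold Gv; omega
  have hM : ∀ v ∈ (MatchF n).vars, v < 4*n+4 := by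
    intro v hv
    rcases vars_MatchF hv with ⟨b,hb,rfl⟩|rfl|⟨b,hb,rfl⟩
    · exact hRv b hb
    · exact hAv 0 (by omega)
    · exact hAv b hb
  have hCR : ∀ v ∈ (CrossRule n).vars, v < 4*n+4 := by
    intro v hv
    rcases vars_CrossRule' hv with h|h
    · exact hM v h
    · rcases h with rfl|rfl
      · exact hCv
      · exact hGv
  have hAE : ∀ K, ∀ v ∈ (addrEq n K).vars, v < 4*n+4 := by
    intro K v hv
    obtain ⟨b, hb, rfl⟩ := vars_addrEq hv
    exact hAv b hb
  have hEO : ∀ w, w < 2 → ∀ v ∈ (EOnce w).vars, v < 4*n+4 := by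
    intro w hw v hva
    simp only [EOnce, fU, fand, fneg, fX, fG, P, HCQF.vars, Set.mem_union,
      Set.mem_singleton_iff, Set.mem_empty_iff_false, false_or, or_false] at hva
    have : v = w := by tauto
    omega
  have hZV : ∀ v ∈ (ZeroVal n).vars, v < 4*n+4 := by
    intro v hva
    simp only [ZeroVal, fU, fand, fneg, fX, P, HCQF.vars, Set.mem_union,
      Set.mem_singleton_iff] at hva
    have : v = Cv n ∨ v ∈ (bstart n).vars := by
      rw [bstart]; tauto
    rcases this with rfl|h
    · exact hCv
    · exact hAE 0 v h
  have hAR : ∀ v ∈ (AddrRules n).vars, v < 4*n+4 := by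
    intro v hva
    simp only [AddrRules, IncA, fG, fU, fiff, fimp, f_or, fxor, fand, fneg, fX,
      HCQF.vars, Set.mem_union, Set.mem_empty_iff_false, false_or, or_false] at hva
    have : v ∈ (Wf n).vars ∨ v ∈ (bstart n).vars ∨
        v ∈ (bigAnd ((List.range (2*n)).map fun b =>
          fiff (fX (P (Av n b))) (fxor (P (Av n b)) (lowAnd n b)))).vars := by
      rw [Wf, bstart]; tauto
    rcases this with h|h|h
    · exact hAE _ v (by rwa [Wf] at h)
    · exact hAE _ v (by rwa [bstart] at h)
    · rw [mem_vars_bigAnd] at h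
      obtain ⟨a, ha, hva2⟩ := h
      simp only [List.mem_map, List.mem_range] at ha
      obtain ⟨b, hb, rfl⟩ := ha
      simp only [lowAnd] at hva2
      simp only [fiff, fimp, f_or, fxor, fand, fneg, fX, P, HCQF.vars, Set.mem_union,
        Set.mem_singleton_iff] at hva2
      have h4 : v = Av n b ∨ v ∈ (bigAnd ((List.range b).map fun b' => P (Av n b'))).vars := by
        tauto
      rcases h4 with rfl|h4
      · exact hAv b hb
      · rw [mem_vars_bigAnd] at h4
        obtain ⟨a, ha, h5⟩ := h4
        simp only [List.mem_map, List.mem_range] at ha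
        obtain ⟨b', hb', rfl⟩ := ha
        have : v = Av n b' := h5
        rw [this]
        exact hAv b' (by omega)
  have hGR : ∀ v ∈ (GRules n).vars, v < 4*n+4 := by
    intro v hva
    simp only [GRules, fG, fU, fiff, fimp, f_or, fand, fneg, fX, P, HCQF.vars,
      Set.mem_union, Set.mem_singleton_iff, Set.mem_empty_iff_false,
      false_or, or_false] at hva
    have : v ∈ (bstart n).vars ∨ v = Gv n ∨ v = Cv n := by rw [bstart]; tauto
    rcases this with h|rfl|rfl
    · exact hAE 0 v (by rwa [bstart] at h)
    · exact hGv
    · exact hCv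
  have hYR : ∀ v ∈ (YRule n).vars, v < 4*n+4 := by
    intro v hva
    simp only [YRule, HasBit, NoBit, fU, fiff, fimp, f_or, fand, fneg, fX, P, HCQF.vars,
      Set.mem_union, Set.mem_singleton_iff, Set.mem_empty_iff_false,
      false_or, or_false] at hva
    have : v ∈ (bstart n).vars ∨ v ∈ (addr2n n).vars ∨ v = Cv n ∨ v = 1 := by
      rw [bstart, addr2n]; tauto
    rcases this with h|h|rfl|rfl
    · exact hAE 0 v (by rwa [bstart] at h)
    · exact hAE _ v (by rwa [addr2n] at h)
    · exact hCv
    · omega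
  intro v hv
  rw [matrixF, mem_vars_bigAnd] at hv
  obtain ⟨a, ha, hva⟩ := hv
  simp only [List.mem_cons, List.not_mem_nil, or_false] at ha
  rcases ha with rfl|rfl|rfl|rfl
  · exact hEO 0 (by omega) v hva
  · exact hEO 1 (by omega) v hva
  · rw [REq, mem_vars_bigAnd] at hva
    obtain ⟨a, ha, hva⟩ := hva
    simp only [List.mem_map, List.mem_range] at ha
    obtain ⟨b, hb, rfl⟩ := ha
    simp only [fG, fU, fiff, fimp, f_or, fand, fneg, P, HCQF.vars, Set.mem_union,
      Set.mem_singleton_iff, Set.mem_empty_iff_false, false_or, or_false] at hva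
    have : v = Rv b ∨ v = Av n 0 := by tauto
    rcases this with rfl|rfl
    · exact hRv b hb
    · exact hAv 0 (by omega)
  · have hcan : v = 0 ∨ v = 1 ∨ v ∈ (addrEq n 0).vars ∨ v = Cv n ∨ v = Gv n ∨
        v ∈ (bstart n).vars ∨ v ∈ (Wf n).vars ∨ v ∈ (IncA n).vars ∨
        v ∈ (addr2n n).vars ∨ v ∈ (Psi n (2*n)).vars := by
      simp only [Anchor, AnchorList, bigAnd, fF, fU, ZeroVal, AddrRules, GRules, YRule,
        HasBit, NoBit, fG, fiff, fimp, f_or, fxor, fand, fneg, fX, P, HCQF.vars,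
        Set.mem_union, Set.mem_singleton_iff, Set.mem_empty_iff_false, false_or,
        or_false] at hva
      tauto
    rcases hcan with rfl|rfl|h|rfl|rfl|h|h|h|h|h
    · omega
    · omega
    · exact hAE 0 v h
    · exact hCv
    · exact hGv
    · exact hAE 0 v (by rwa [bstart] at h)
    · exact hAE _ v (by rwa [Wf] at h)
    · refine hAR v ?_
      simp only [AddrRules, fG, fU, fimp, f_or, fand, fneg, fX, HCQF.vars, Set.mem_union]
      tauto
    · exact hAE _ v (by rwa [addr2n] at h)
    · exact hCR v (vars_Psi h)

lemma zero_mem_vars {n : ℕ} : 0 ∈ (matrixF n).vars := by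
  rw [matrixF, mem_vars_bigAnd]
  refine ⟨EOnce 0, by simp, ?_⟩
  show (0:ℕ) ∈ (EOnce 0).vars
  simp only [EOnce, fU, fand, fneg, fX, fG, P, HCQF.vars, Set.mem_union,
    Set.mem_singleton_iff]
  tauto

lemma one_mem_vars {n : ℕ} : 1 ∈ (matrixF n).vars := by
  rw [matrixF, mem_vars_bigAnd]
  refine ⟨EOnce 1, by simp, ?_⟩
  show (1:ℕ) ∈ (EOnce 1).vars
  simp only [EOnce, fU, fand, fneg, fX, fG, P, HCQF.vars, Set.mem_union,
    Set.mem_singleton_iff]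
  tauto






/-! ### Boundedness -/

def NoCtx : F → Prop
  | HCQF.tt => True
  | HCQF.atom _ _ => True
  | HCQF.neg a => NoCtx a
  | HCQF.conj a b => NoCtx a ∧ NoCtx b
  | HCQF.next a => NoCtx a
  | HCQF.untl a b => NoCtx a ∧ NoCtx b
  | HCQF.ctx _ _ _ => False

lemma ba_of_noCtx (g : Set ℕ) : ∀ φ : F, NoCtx φ → HCQF.BoundedAux g false φ := by
  intro φ
  induction φ with
  | tt => intro _; trivial
  | atom p x => intro _; trivial
  | neg a ih => exact ih
  | conj a b iha ihb => intro h; exact ⟨iha h.1, ihb h.2⟩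
  | next a ih => exact ih
  | untl a b iha ihb => intro h; exact ⟨iha h.1, ihb h.2⟩
  | ctx D hD a ih => intro h; exact h.elim

lemma noCtx_bigAnd {l : List F} (h : ∀ a ∈ l, NoCtx a) : NoCtx (bigAnd l) := by
  induction l with
  | nil => trivial
  | cons a l ih => exact ⟨h a (by simp), ih (fun b hb => h b (by simp [hb]))⟩

lemma noCtx_P {v : ℕ} : NoCtx (P v) := trivial

lemma noCtx_addrEq {n K : ℕ} : NoCtx (addrEq n K) := by
  apply noCtx_bigAnd
  intro a ha
  simp only [List.mem_map, List.mem_range] at ha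
  obtain ⟨b, hb, rfl⟩ := ha
  split_ifs <;> trivial

lemma noCtx_fand {a b : F} (ha : NoCtx a) (hb : NoCtx b) : NoCtx (fand a b) := ⟨ha, hb⟩
lemma noCtx_fneg {a : F} (ha : NoCtx a) : NoCtx (fneg a) := ha
lemma noCtx_fX {a : F} (ha : NoCtx a) : NoCtx (fX a) := ha
lemma noCtx_fU {a b : F} (ha : NoCtx a) (hb : NoCtx b) : NoCtx (fU a b) := ⟨ha, hb⟩
lemma noCtx_for {a b : F} (ha : NoCtx a) (hb : NoCtx b) : NoCtx (f_or a b) := ⟨ha, hb⟩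
lemma noCtx_fimp {a b : F} (ha : NoCtx a) (hb : NoCtx b) : NoCtx (fimp a b) := ⟨ha, hb⟩
lemma noCtx_fiff {a b : F} (ha : NoCtx a) (hb : NoCtx b) : NoCtx (fiff a b) :=
  ⟨⟨ha, hb⟩, ⟨hb, ha⟩⟩
lemma noCtx_fxor {a b : F} (ha : NoCtx a) (hb : NoCtx b) : NoCtx (fxor a b) :=
  ⟨⟨ha, hb⟩, ⟨hb, ha⟩⟩
lemma noCtx_fF {a : F} (ha : NoCtx a) : NoCtx (fF a) := ⟨trivial, ha⟩
lemma noCtx_fG {a : F} (ha : NoCtx a) : NoCtx (fG a) := ⟨trivial, ha⟩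

lemma noCtx_MatchF {n : ℕ} : NoCtx (MatchF n) := by
  apply noCtx_bigAnd
  intro a ha
  simp only [List.mem_map, List.mem_range] at ha
  obtain ⟨b, hb, rfl⟩ := ha
  refine noCtx_fiff ?_ noCtx_P
  unfold readBit
  exact noCtx_fxor noCtx_P noCtx_P

lemma noCtx_lowAnd {n b : ℕ} : NoCtx (lowAnd n b) := by
  apply noCtx_bigAnd
  intro a ha
  simp only [List.mem_map, List.mem_range] at ha
  obtain ⟨b', hb', rfl⟩ := ha
  trivial

lemma noCtx_IncA {n : ℕ} : NoCtx (IncA n) := by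
  apply noCtx_bigAnd
  intro a ha
  simp only [List.mem_map, List.mem_range] at ha
  obtain ⟨b, hb, rfl⟩ := ha
  exact noCtx_fiff (noCtx_fX noCtx_P) (noCtx_fxor noCtx_P noCtx_lowAnd)

lemma noCtx_CrossRuleBody {n : ℕ} :
    NoCtx (fimp (MatchF n) (fand (fimp (dvg n) (NextC n)) (fimp (fneg (dvg n)) (NextNC n)))) := by
  have hM : NoCtx (MatchF n) := noCtx_MatchF
  have hd : NoCtx (dvg n) := noCtx_fxor noCtx_P noCtx_P
  have hNC : NoCtx (NextC n) := noCtx_fX (noCtx_fU (noCtx_fneg hM) (noCtx_fand hM noCtx_P))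
  have hNNC : NoCtx (NextNC n) :=
    noCtx_fX (noCtx_fU (noCtx_fneg hM) (noCtx_fand hM (noCtx_fneg noCtx_P)))
  exact noCtx_fimp hM (noCtx_fand (noCtx_fimp hd hNC) (noCtx_fimp (noCtx_fneg hd) hNNC))

lemma noCtx_CrossRule {n : ℕ} : NoCtx (CrossRule n) := noCtx_fG noCtx_CrossRuleBody

lemma ba_Psi {n : ℕ} (g : Set ℕ) : ∀ b (t : Bool), HCQF.BoundedAux g t (Psi n b) := by
  intro b
  induction b with
  | zero =>
    intro t
    cases t <;>
      exact ⟨fun _ => ba_of_noCtx g _ noCtx_CrossRule,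
        fun h => absurd (Set.subset_univ g) h⟩
  | succ b ih =>
    intro t
    cases t <;> exact ⟨⟨fun _ => ih false, fun _ => ih true⟩, ih _⟩

lemma ba_bigAnd {g : Set ℕ} {t : Bool} {l : List F}
    (h : ∀ a ∈ l, HCQF.BoundedAux g t a) : HCQF.BoundedAux g t (bigAnd l) := by
  induction l with
  | nil => cases t <;> trivial
  | cons a l ih =>
    have hh := ih (fun b hb => h b (by simp [hb]))
    have ha := h a (by simp)
    cases t
    · exact (⟨ha, hh⟩ : HCQF.BoundedAux g false (fand a (bigAnd l)))
    · exact (⟨ha, hh⟩ : HCQF.BoundedAux g true (fand a (bigAnd l)))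

lemma isBounded_matrix {n : ℕ} : (matrixF n).IsBounded := by
  unfold HCQF.IsBounded
  set g := (matrixF n).vars
  apply ba_bigAnd
  intro a ha
  simp only [List.mem_cons, List.not_mem_nil, or_false] at ha
  have hEO : ∀ w, NoCtx (EOnce w) :=
    fun w => noCtx_fU (noCtx_fneg noCtx_P)
      (noCtx_fand noCtx_P (noCtx_fX (noCtx_fG (noCtx_fneg noCtx_P))))
  rcases ha with rfl|rfl|rfl|rfl
  · exact ba_of_noCtx g _ (hEO 0)
  · exact ba_of_noCtx g _ (hEO 1)
  · refine ba_of_noCtx g _ ?_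
    apply noCtx_bigAnd
    intro a ha
    simp only [List.mem_map, List.mem_range] at ha
    obtain ⟨b, hb, rfl⟩ := ha
    exact noCtx_fG (noCtx_fiff noCtx_P noCtx_P)
  · -- Anchor
    refine ⟨trivial, ?_⟩
    apply ba_bigAnd
    intro a ha
    simp only [AnchorList, List.mem_cons, List.not_mem_nil, or_false] at ha
    have hzv : NoCtx (ZeroVal n) :=
      noCtx_fand (noCtx_fneg noCtx_P) (noCtx_fX (noCtx_fU (noCtx_fneg noCtx_P) noCtx_addrEq))
    have har : NoCtx (AddrRules n) :=
      noCtx_fG (noCtx_fand (noCtx_fimp noCtx_addrEq (noCtx_fX noCtx_addrEq))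
        (noCtx_fimp (noCtx_fneg noCtx_addrEq) noCtx_IncA))
    have hgr : NoCtx (GRules n) :=
      noCtx_fand (noCtx_fG (noCtx_fimp noCtx_addrEq noCtx_P))
        (noCtx_fG (noCtx_fimp (noCtx_fneg (noCtx_fX noCtx_addrEq))
          (noCtx_fiff (noCtx_fX noCtx_P) (noCtx_fand noCtx_P noCtx_P))))
    have hyr : NoCtx (YRule n) :=
      noCtx_fU
        (noCtx_fand (noCtx_fimp noCtx_addrEq
          (noCtx_fX (noCtx_fU (noCtx_fneg noCtx_addrEq)
            (noCtx_fand noCtx_addrEq (noCtx_fneg noCtx_P))))) (noCtx_fneg noCtx_P))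
        (noCtx_fand noCtx_addrEq
          (noCtx_fand (noCtx_fX (noCtx_fU (noCtx_fneg noCtx_addrEq)
            (noCtx_fand noCtx_addrEq noCtx_P))) noCtx_P))
    rcases ha with rfl|rfl|rfl|rfl|rfl|rfl|rfl
    · exact ba_of_noCtx g _ noCtx_P
    · exact ba_of_noCtx g _ noCtx_addrEq
    · exact ba_of_noCtx g _ hzv
    · exact ba_of_noCtx g _ har
    · exact ba_of_noCtx g _ hgr
    · exact ba_Psi g (2*n) false
    · exact ba_of_noCtx g _ hyr

/-! ### Size bounds -/

lemma size_tt : (HCQF.tt : F).size = 1 := by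
  unfold HCQF.size
  show ({HCQF.tt} : Set F).ncard = 1
  exact Set.ncard_singleton _

lemma size_P {v : ℕ} : (P v).size = 1 := by
  unfold HCQF.size
  show ({HCQF.atom () v} : Set F).ncard = 1
  exact Set.ncard_singleton _

lemma size_fneg (a : F) : (fneg a).size ≤ a.size + 1 := Set.ncard_insert_le _ _

lemma size_fX (a : F) : (fX a).size ≤ a.size + 1 := Set.ncard_insert_le _ _

lemma size_ctx {C : Set ℕ} {h} (a : F) : (HCQF.ctx C h a).size ≤ a.size + 1 :=
  Set.ncard_insert_le _ _

lemma size_fand (a b : F) : (fand a b).size ≤ a.size + b.size + 1 := by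
  calc (fand a b).size ≤ (a.subf ∪ b.subf).ncard + 1 := Set.ncard_insert_le _ _
    _ ≤ (a.subf.ncard + b.subf.ncard) + 1 :=
        Nat.add_le_add_right (Set.ncard_union_le _ _) 1

lemma size_fU (a b : F) : (fU a b).size ≤ a.size + b.size + 1 := by
  calc (fU a b).size ≤ (a.subf ∪ b.subf).ncard + 1 := Set.ncard_insert_le _ _
    _ ≤ (a.subf.ncard + b.subf.ncard) + 1 :=
        Nat.add_le_add_right (Set.ncard_union_le _ _) 1

lemma size_for (a b : F) : (f_or a b).size ≤ a.size + b.size + 4 := by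
  have h1 := size_fneg (fand (fneg a) (fneg b))
  have h2 := size_fand (fneg a) (fneg b)
  have h3 := size_fneg a
  have h4 := size_fneg b
  unfold f_or
  omega

lemma size_fimp (a b : F) : (fimp a b).size ≤ a.size + b.size + 5 := by
  have h1 := size_for (fneg a) b
  have h2 := size_fneg a
  unfold fimp
  omega

lemma size_fiff (a b : F) : (fiff a b).size ≤ 2*a.size + 2*b.size + 11 := by
  have h1 := size_fand (fimp a b) (fimp b a)
  have h2 := size_fimp a b
  have h3 := size_fimp b a
  unfold fiff
  omega

lemma size_fxor (a b : F) : (fxor a b).size ≤ 2*a.size + 2*b.size + 12 := by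
  have h1 := size_fneg (fiff a b)
  have h2 := size_fiff a b
  unfold fxor
  omega

lemma size_fF (a : F) : (fF a).size ≤ a.size + 2 := by
  have h1 := size_fU HCQF.tt a
  have h2 := size_tt
  unfold fF
  omega

lemma size_fG (a : F) : (fG a).size ≤ a.size + 4 := by
  have h1 := size_fneg (fU HCQF.tt (fneg a))
  have h2 := size_fU HCQF.tt (fneg a)
  have h3 := size_fneg a
  have h4 := size_tt
  unfold fG
  omega

lemma size_bigAnd_le {l : List F} {B : ℕ} (h : ∀ a ∈ l, a.size ≤ B) :
    (bigAnd l).size ≤ l.length * (B+1) + 1 := by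
  induction l with
  | nil => simp [bigAnd, size_tt]
  | cons a l ih =>
    have h1 := size_fand a (bigAnd l)
    have h2 := h a (by simp)
    have h3 := ih (fun b hb => h b (by simp [hb]))
    simp only [bigAnd, List.length_cons]
    have : (l.length + 1) * (B+1) = l.length * (B+1) + (B+1) := by ring
    omega

lemma len_range_map {m : ℕ} {f : ℕ → F} : ((List.range m).map f).length = m := by
  simp

lemma size_addrEq {n K : ℕ} : (addrEq n K).size ≤ 2*n * 3 + 1 := by
  have h := size_bigAnd_le (l := (List.range (2*n)).map fun b =>
      if K.testBit b then P (Av n b) else fneg (P (Av n b))) (B := 2) ?_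
  · rw [len_range_map] at h
    exact h
  · intro a ha
    simp only [List.mem_map, List.mem_range] at ha
    obtain ⟨b, hb, rfl⟩ := ha
    split_ifs
    · rw [size_P]; omega
    · have := size_fneg (P (Av n b)); rw [size_P] at this; omega

lemma size_MatchF {n : ℕ} : (MatchF n).size ≤ 2*n * 46 + 1 := by
  have h := size_bigAnd_le (l := (List.range (2*n)).map fun b =>
      fiff (readBit n b) (P (Av n b))) (B := 45) ?_
  · rw [len_range_map] at h
    exact h
  · intro a ha
    simp only [List.mem_map, List.mem_range] at ha
    obtain ⟨b, hb, rfl⟩ := ha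
    have h1 := size_fiff (readBit n b) (P (Av n b))
    have h2 : (readBit n b).size ≤ 16 := by
      have h3 := size_fxor (P (Rv b)) (P (Av n 0))
      rw [size_P, size_P] at h3
      unfold readBit
      omega
    rw [size_P] at h1
    omega

lemma size_lowAnd {n b : ℕ} (hb : b ≤ 2*n) : (lowAnd n b).size ≤ 4*n + 1 := by
  have h := size_bigAnd_le (l := (List.range b).map fun b' => P (Av n b')) (B := 1) ?_
  · rw [len_range_map] at h
    calc (lowAnd n b).size ≤ b * 2 + 1 := h
      _ ≤ 4*n+1 := by omega
  · intro a ha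
    simp only [List.mem_map, List.mem_range] at ha
    obtain ⟨b', hb', rfl⟩ := ha
    rw [size_P]

lemma size_IncA {n : ℕ} : (IncA n).size ≤ 2*n * (16*n + 48) + 1 := by
  have h := size_bigAnd_le (l := (List.range (2*n)).map fun b =>
      fiff (fX (P (Av n b))) (fxor (P (Av n b)) (lowAnd n b))) (B := 16*n + 47) ?_
  · rw [len_range_map] at h
    exact h
  · intro a ha
    simp only [List.mem_map, List.mem_range] at ha
    obtain ⟨b, hb, rfl⟩ := ha
    have h1 := size_fiff (fX (P (Av n b))) (fxor (P (Av n b)) (lowAnd n b))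
    have h2 := size_fX (P (Av n b))
    have h3 := size_fxor (P (Av n b)) (lowAnd n b)
    have h4 := size_lowAnd (n := n) (b := b) (by omega)
    rw [size_P] at h2 h3
    omega

lemma size_Psi_step {n b : ℕ} : (Psi n (b+1)).size ≤ (Psi n b).size + 3 := by
  have hsub : (Psi n b).subf ⊆ (HCQF.ctx {Rv b} ⟨Rv b, rfl⟩ (fX (Psi n b))).subf := by
    show (Psi n b).subf ⊆ insert _ (insert _ (Psi n b).subf)
    intro x hx
    exact Set.mem_insert_of_mem _ (Set.mem_insert_of_mem _ hx)
  have hU : (HCQF.ctx {Rv b} ⟨Rv b, rfl⟩ (fX (Psi n b))).subf ∪ (Psi n b).subf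
      = (HCQF.ctx {Rv b} ⟨Rv b, rfl⟩ (fX (Psi n b))).subf :=
    Set.union_eq_self_of_subset_right hsub
  show (insert _ ((HCQF.ctx {Rv b} ⟨Rv b, rfl⟩ (fX (Psi n b))).subf ∪ (Psi n b).subf)).ncard ≤ _
  rw [hU]
  calc (insert _ ((HCQF.ctx {Rv b} ⟨Rv b, rfl⟩ (fX (Psi n b))).subf)).ncard
      ≤ (HCQF.ctx {Rv b} ⟨Rv b, rfl⟩ (fX (Psi n b))).subf.ncard + 1 := Set.ncard_insert_le _ _
    _ ≤ ((fX (Psi n b)).subf.ncard + 1) + 1 :=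
        Nat.add_le_add_right (Set.ncard_insert_le _ _) 1
    _ ≤ (((Psi n b).subf.ncard + 1) + 1) + 1 :=
        Nat.add_le_add_right (Nat.add_le_add_right (Set.ncard_insert_le _ _) 1) 1
    _ ≤ _ := by unfold HCQF.size; omega

lemma size_Psi {n : ℕ} : ∀ b, (Psi n b).size ≤ (CrossRule n).size + 1 + 3*b := by
  intro b
  induction b with
  | zero =>
    have := size_ctx (C := Set.univ) (h := ⟨0, trivial⟩) (CrossRule n)
    exact this
  | succ b ih =>
    have := size_Psi_step (n := n) (b := b)
    omega

lemma size_matrix {n : ℕ} (hn : 2 ≤ n) : (matrixF n).size ≤ 1000 * n^2 + 30000 * n + 20000 := by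
  have hP : ∀ v : ℕ, (P v).size = 1 := fun v => size_P
  have hEO : ∀ w : ℕ, (EOnce w).size ≤ 12 := by
    intro w
    have h1 := size_fU (fneg (P w)) (fand (P w) (fX (fG (fneg (P w)))))
    have h2 := size_fneg (P w)
    have h3 := size_fand (P w) (fX (fG (fneg (P w))))
    have h4 := size_fX (fG (fneg (P w)))
    have h5 := size_fG (fneg (P w))
    rw [size_P] at h2 h3
    unfold EOnce
    omega
  have hbs : (bstart n).size ≤ 6*n+1 := by
    have := size_addrEq (n := n) (K := 0); unfold bstart; omega
  have ha2 : (addr2n n).size ≤ 6*n+1 := by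
    have := size_addrEq (n := n) (K := 2^n); unfold addr2n; omega
  have hWf : (Wf n).size ≤ 6*n+1 := by
    have := size_addrEq (n := n) (K := LL n - 1); unfold Wf; omega
  have hREq : (REq n).size ≤ 2*n*20 + 1 := by
    have h := size_bigAnd_le (l := (List.range (2*n)).map fun b =>
        fG (fiff (P (Rv b)) (P (Av n 0)))) (B := 19) ?_
    · rw [len_range_map] at h; unfold REq; exact h
    · intro a ha
      simp only [List.mem_map, List.mem_range] at ha
      obtain ⟨b, hb, rfl⟩ := ha
      have h1 := size_fG (fiff (P (Rv b)) (P (Av n 0)))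
      have h2 := size_fiff (P (Rv b)) (P (Av n 0))
      rw [size_P, size_P] at h2
      omega
  have hZV : (ZeroVal n).size ≤ 6*n + 10 := by
    have h1 := size_fand (fneg (P (Cv n))) (fX (fU (fneg (P (Cv n))) (bstart n)))
    have h2 := size_fneg (P (Cv n))
    have h3 := size_fX (fU (fneg (P (Cv n))) (bstart n))
    have h4 := size_fU (fneg (P (Cv n))) (bstart n)
    rw [size_P] at h2
    unfold ZeroVal
    omega
  have hAR : (AddrRules n).size ≤ 32*n^2 + 120*n + 30 := by
    have h1 := size_fG (fand (fimp (Wf n) (fX (bstart n))) (fimp (fneg (Wf n)) (IncA n)))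
    have h2 := size_fand (fimp (Wf n) (fX (bstart n))) (fimp (fneg (Wf n)) (IncA n))
    have h3 := size_fimp (Wf n) (fX (bstart n))
    have h4 := size_fX (bstart n)
    have h5 := size_fimp (fneg (Wf n)) (IncA n)
    have h6 := size_fneg (Wf n)
    have h7 := size_IncA (n := n)
    have h8 : 2*n*(16*n+48) = 32*n^2 + 96*n := by ring
    unfold AddrRules
    omega
  have hGR : (GRules n).size ≤ 12*n + 60 := by
    have h1 := size_fand (fG (fimp (bstart n) (P (Gv n))))
      (fG (fimp (fneg (fX (bstart n))) (fiff (fX (P (Gv n))) (fand (P (Gv n)) (P (Cv n))))))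
    have h2 := size_fG (fimp (bstart n) (P (Gv n)))
    have h3 := size_fimp (bstart n) (P (Gv n))
    have h4 := size_fG (fimp (fneg (fX (bstart n))) (fiff (fX (P (Gv n))) (fand (P (Gv n)) (P (Cv n)))))
    have h5 := size_fimp (fneg (fX (bstart n))) (fiff (fX (P (Gv n))) (fand (P (Gv n)) (P (Cv n))))
    have h6 := size_fneg (fX (bstart n))
    have h7 := size_fX (bstart n)
    have h8 := size_fiff (fX (P (Gv n))) (fand (P (Gv n)) (P (Cv n)))
    have h9 := size_fX (P (Gv n))
    have h10 := size_fand (P (Gv n)) (P (Cv n))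
    rw [size_P] at h3 h9 h10
    rw [size_P] at h10
    unfold GRules
    omega
  have hCR : (CrossRule n).size ≤ 600*n + 200 := by
    have hM := size_MatchF (n := n)
    have hd : (dvg n).size ≤ 16 := by
      have := size_fxor (P (Cv n)) (P (Gv n))
      rw [size_P, size_P] at this
      unfold dvg
      omega
    have hNC : (NextC n).size ≤ 2*(2*n*46+1) + 7 := by
      have h1 := size_fX (fU (fneg (MatchF n)) (fand (MatchF n) (P (Cv n))))
      have h2 := size_fU (fneg (MatchF n)) (fand (MatchF n) (P (Cv n)))
      have h3 := size_fneg (MatchF n)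
      have h4 := size_fand (MatchF n) (P (Cv n))
      rw [size_P] at h4
      unfold NextC
      omega
    have hNNC : (NextNC n).size ≤ 2*(2*n*46+1) + 8 := by
      have h1 := size_fX (fU (fneg (MatchF n)) (fand (MatchF n) (fneg (P (Cv n)))))
      have h2 := size_fU (fneg (MatchF n)) (fand (MatchF n) (fneg (P (Cv n))))
      have h3 := size_fneg (MatchF n)
      have h4 := size_fand (MatchF n) (fneg (P (Cv n)))
      have h5 := size_fneg (P (Cv n))
      rw [size_P] at h5
      unfold NextNC
      omega
    have h1 := size_fG (fimp (MatchF n) (fand (fimp (dvg n) (NextC n)) (fimp (fneg (dvg n)) (NextNC n))))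
    have h2 := size_fimp (MatchF n) (fand (fimp (dvg n) (NextC n)) (fimp (fneg (dvg n)) (NextNC n)))
    have h3 := size_fand (fimp (dvg n) (NextC n)) (fimp (fneg (dvg n)) (NextNC n))
    have h4 := size_fimp (dvg n) (NextC n)
    have h5 := size_fimp (fneg (dvg n)) (NextNC n)
    have h6 := size_fneg (dvg n)
    unfold CrossRule
    omega
  have hPsi : (Psi n (2*n)).size ≤ 600*n + 201 + 6*n := by
    have h1 := size_Psi (n := n) (2*n)
    omega
  have hHB : (HasBit n).size ≤ 12*n + 8 := by
    have h1 := size_fX (fU (fneg (bstart n)) (fand (addr2n n) (P (Cv n))))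
    have h2 := size_fU (fneg (bstart n)) (fand (addr2n n) (P (Cv n)))
    have h3 := size_fneg (bstart n)
    have h4 := size_fand (addr2n n) (P (Cv n))
    rw [size_P] at h4
    unfold HasBit
    omega
  have hNB : (NoBit n).size ≤ 12*n + 9 := by
    have h1 := size_fX (fU (fneg (bstart n)) (fand (addr2n n) (fneg (P (Cv n)))))
    have h2 := size_fU (fneg (bstart n)) (fand (addr2n n) (fneg (P (Cv n))))
    have h3 := size_fneg (bstart n)
    have h4 := size_fand (addr2n n) (fneg (P (Cv n)))
    have h5 := size_fneg (P (Cv n))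
    rw [size_P] at h5
    unfold NoBit
    omega
  have hYR : (YRule n).size ≤ 40*n + 50 := by
    have h1 := size_fU (fand (fimp (bstart n) (NoBit n)) (fneg (P 1)))
      (fand (bstart n) (fand (HasBit n) (P 1)))
    have h2 := size_fand (fimp (bstart n) (NoBit n)) (fneg (P 1))
    have h3 := size_fimp (bstart n) (NoBit n)
    have h4 := size_fneg (P 1)
    have h5 := size_fand (bstart n) (fand (HasBit n) (P 1))
    have h6 := size_fand (HasBit n) (P 1)
    rw [size_P] at h4 h6
    unfold YRule
    omega
  have hAEq := size_addrEq (n := n) (K := 0)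
  have hanchor : (Anchor n).size ≤ 224*n^2 + 6000*n + 4000 := by
    have hlist : ∀ a ∈ AnchorList n, a.size ≤ 32*n^2 + 780*n + 500 := by
      intro a ha
      simp only [AnchorList, List.mem_cons, List.not_mem_nil, or_false] at ha
      have hn2 : 0 ≤ 32*n^2 := by positivity
      rcases ha with rfl|rfl|rfl|rfl|rfl|rfl|rfl
      · rw [size_P]; omega
      · omega
      · omega
      · omega
      · omega
      · omega
      · omega
    have h1 := size_bigAnd_le hlist
    have h2 : (AnchorList n).length = 7 := rfl
    rw [h2] at h1
    have h3 := size_fF (bigAnd (AnchorList n))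
    have h4 : 7 * (32*n^2 + 780*n + 500 + 1) = 224*n^2 + 5460*n + 3507 := by ring
    unfold Anchor
    omega
  have hfinal : ∀ a ∈ [EOnce 0, EOnce 1, REq n, Anchor n], a.size ≤ 224*n^2 + 6000*n + 4000 := by
    intro a ha
    have hn2 : 0 ≤ 224*n^2 := by positivity
    simp only [List.mem_cons, List.not_mem_nil, or_false] at ha
    rcases ha with rfl|rfl|rfl|rfl
    · have := hEO 0; omega
    · have := hEO 1; omega
    · omega
    · omega
  have h1 := size_bigAnd_le hfinal
  have h2 : ([EOnce 0, EOnce 1, REq n, Anchor n] : List F).length = 4 := rfl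
  rw [h2] at h1
  have h4 : 4 * (224*n^2 + 6000*n + 4000 + 1) = 896*n^2 + 24000*n + 16004 := by ring
  unfold matrixF
  exact h1.trans (by omega)


/-! ### Quantifier prefix -/

lemma satPfx_ex (P : PTA Unit ℕ → Prop) :
    ∀ (vs : List ℕ) (Δ : PTA Unit ℕ),
      SatPfx Set.univ (vs.map fun v => (Quant.ex, v)) P Δ ↔
        ∃ f : ℕ → Trace Unit, P (fun w => if w ∈ vs then (f w, 0) else Δ w) := by
  intro vs
  induction vs with
  | nil =>
    intro Δ
    show P Δ ↔ _
    constructor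
    · intro h
      refine ⟨fun _ _ => ∅, ?_⟩
      have he : (fun w => if w ∈ ([] : List ℕ) then ((fun _ (_ : ℕ) => (∅ : Set Unit)) w, 0) else Δ w) = Δ := by
        funext w; simp
      rw [he]
      exact h
    · rintro ⟨f, hf⟩
      have he : (fun w => if w ∈ ([] : List ℕ) then (f w, 0) else Δ w) = Δ := by
        funext w; simp
      rwa [he] at hf
  | cons v vs ih =>
    intro Δ
    show (∃ π ∈ Set.univ, SatPfx Set.univ (vs.map fun v => (Quant.ex, v)) P
      (Function.update Δ v (π, 0))) ↔ _
    constructor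
    · rintro ⟨π, -, hπ⟩
      obtain ⟨f, hf⟩ := (ih _).mp hπ
      refine ⟨fun w => if w ∈ vs then f w else π, ?_⟩
      have he : (fun w => if w ∈ v :: vs then ((fun w => if w ∈ vs then f w else π) w, 0) else Δ w)
          = (fun w => if w ∈ vs then (f w, 0) else Function.update Δ v (π, 0) w) := by
        funext w
        by_cases h1 : w ∈ vs
        · simp [h1]
        · by_cases h2 : w = v
          · subst h2
            simp [h1, Function.update_self]
          · simp [h1, h2, Function.update_of_ne h2]
      rw [he]
      exact hf
    · rintro ⟨f, hf⟩
      refine ⟨f v, trivial, ?_⟩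
      refine (ih _).mpr ⟨f, ?_⟩
      have he : (fun w => if w ∈ vs then (f w, 0) else Function.update Δ v (f v, 0) w)
          = (fun w => if w ∈ v :: vs then (f w, 0) else Δ w) := by
        funext w
        by_cases h1 : w ∈ vs
        · simp [h1]
        · by_cases h2 : w = v
          · subst h2
            simp [h1, Function.update_self]
          · simp [h1, h2, Function.update_of_ne h2]
      rw [he]
      exact hf

lemma pre19_eq (n : ℕ) :
    pre19 n = (((List.range (4*n+2)).map fun k => k+2).map fun v => (Quant.ex, v)) := by
  unfold pre19
  rw [List.map_map]
  rfl

end S19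

set_option maxHeartbeats 1000000

theorem stmt19 :
    ∃ c d : ℕ, ∀ n : ℕ, 1 < n →
      ∃ φ : HCSentence Unit ℕ,
        (∀ q ∈ φ.pre, q.1 = Quant.ex) ∧
        (φ.pre.map Prod.snd).Nodup ∧
        (∀ x ∈ φ.pre.map Prod.snd, x ≠ 0 ∧ x ≠ 1) ∧
        (∀ x ∈ φ.matrix.vars, x = 0 ∨ x = 1 ∨ x ∈ φ.pre.map Prod.snd) ∧
        0 ∈ φ.matrix.vars ∧ 1 ∈ φ.matrix.vars ∧
        φ.matrix.IsBounded ∧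
        φ.matrix.size ≤ c * n ^ d ∧
        (∀ (πx πy : Trace Unit) (Δ₀ : PTA Unit ℕ),
          Δ₀ 0 = (πx, 0) → Δ₀ 1 = (πy, 0) →
          (SatPfx Set.univ φ.pre (fun Δ => φ.matrix.Sat Δ Set.univ) Δ₀ ↔
            ((∃! i : ℕ, () ∈ πx i) ∧ (∃! i : ℕ, () ∈ πy i) ∧
             ∀ i : ℕ, () ∈ πx i ↔ () ∈ πy (i + n * 2 ^ n * 2 ^ (2 ^ n))))) := by
  refine ⟨1000000, 3, ?_⟩
  intro n hn
  have hn2 : 2 ≤ n := hn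
  set vs : List ℕ := (List.range (4*n+2)).map fun k => k+2 with hvs
  have hmemvs : ∀ w : ℕ, w ∈ vs ↔ (2 ≤ w ∧ w < 4*n+4) := by
    intro w
    rw [hvs]
    simp only [List.mem_map, List.mem_range]
    constructor
    · rintro ⟨k, hk, rfl⟩; omega
    · intro ⟨h1, h2⟩; exact ⟨w - 2, by omega, by omega⟩
  refine ⟨S19.sent n, ?_, ?_, ?_, ?_, ?_, ?_, ?_, ?_, ?_⟩
  · intro q hq
    simp only [S19.sent, S19.pre19, List.mem_map, List.mem_range] at hq
    obtain ⟨k, -, rfl⟩ := hq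
    rfl
  · show ((S19.pre19 n).map Prod.snd).Nodup
    have he : (S19.pre19 n).map Prod.snd = (List.range (4*n+2)).map (fun k => k+2) := by
      unfold S19.pre19
      rw [List.map_map]
      rfl
    rw [he]
    refine List.Nodup.map ?_ List.nodup_range
    intro a b h
    have h2 : a + 2 = b + 2 := h
    omega
  · intro x hx
    simp only [S19.sent, S19.pre19, List.map_map, List.mem_map, List.mem_range,
      Function.comp] at hx
    obtain ⟨k, -, rfl⟩ := hx
    exact ⟨by omega, by omega⟩
  · intro x hx
    have hlt := S19.vars_lt hn2 x hx
    rcases Nat.lt_or_ge x 2 with h|h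
    · interval_cases x
      · exact Or.inl rfl
      · exact Or.inr (Or.inl rfl)
    · refine Or.inr (Or.inr ?_)
      simp only [S19.sent, S19.pre19, List.map_map, List.mem_map, List.mem_range,
        Function.comp]
      exact ⟨x - 2, by omega, by omega⟩
  · exact S19.zero_mem_vars
  · exact S19.one_mem_vars
  · exact S19.isBounded_matrix
  · have h := S19.size_matrix hn2
    have h1 : n^2 ≤ n^3 := Nat.pow_le_pow_right (by omega) (by omega)
    have h2 : n ≤ n^3 := by
      calc n = n^1 := (pow_one n).symm
        _ ≤ n^3 := Nat.pow_le_pow_right (by omega) (by omega)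
    have h3 : 1 ≤ n^3 := Nat.one_le_pow _ _ (by omega)
    show (S19.matrixF n).size ≤ 1000000 * n^3
    nlinarith
  · intro πx πy Δ₀ h0 h1
    have hpre : (S19.sent n).pre = vs.map fun v => (Quant.ex, v) := by
      show S19.pre19 n = _
      rw [S19.pre19_eq n, hvs]
    have hmx : (S19.sent n).matrix = S19.matrixF n := rfl
    rw [hpre, hmx]
    rw [S19.satPfx_ex]
    constructor
    · rintro ⟨f, hf⟩
      set τ : ℕ → Trace Unit := fun v => if v = 0 then πx else if v = 1 then πy else f v with hτ
      have hagree : ∀ v ∈ (S19.matrixF n).vars,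
          (fun w => if w ∈ vs then (f w, 0) else Δ₀ w) v = S19.Δc τ 0 v := by
        intro v hv
        have hlt := S19.vars_lt hn2 v hv
        rcases Nat.lt_or_ge v 2 with h|h
        · interval_cases v
          · have : (0:ℕ) ∉ vs := by rw [hmemvs]; omega
            simp only [this, if_false, h0]
            show (πx, 0) = (τ 0, 0)
            simp [hτ]
          · have : (1:ℕ) ∉ vs := by rw [hmemvs]; omega
            simp only [this, if_false, h1]
            show (πy, 0) = (τ 1, 0)
            simp [hτ]
        · have hmem : v ∈ vs := by rw [hmemvs]; omega
          simp only [hmem, if_true]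
          show (f v, 0) = (τ v, 0)
          simp [hτ, show ¬ (v = 0) from by omega, show ¬ (v = 1) from by omega]
      have hsat : (S19.matrixF n).Sat (S19.Δc τ 0) Set.univ :=
        (S19.sat_congr _ _ _ _ hagree).mp hf
      have hres := S19.forward hn2 hsat
      have ht0 : τ 0 = πx := by simp [hτ]
      have ht1 : τ 1 = πy := by simp [hτ]
      rw [ht0, ht1] at hres
      exact hres
    · rintro ⟨hex, hey, hsh⟩
      obtain ⟨i₀, hi₀, hux⟩ := hex
      obtain ⟨iy, hiy, huy⟩ := hey
      have hxmem : ∀ i, (() ∈ πx i ↔ i = i₀) := by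
        intro i
        exact ⟨fun h => hux i h, fun h => h ▸ hi₀⟩
      have hiyv : iy = i₀ + S19.LL n * S19.MM n := by
        have hy2 : () ∈ πy (i₀ + n * 2^n * 2^(2^n)) := (hsh i₀).mp hi₀
        have h3 := huy _ hy2
        rw [← h3]
        rfl
      have hymem : ∀ i, (() ∈ πy i ↔ i = i₀ + S19.LL n * S19.MM n) := by
        intro i
        constructor
        · intro h; rw [← hiyv]; exact huy i h
        · intro h; rw [h, ← hiyv]; exact hiy
      have hsat := S19.backward hn2 hxmem hymem
      refine ⟨S19.tau n i₀ πx πy, ?_⟩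
      have hagree : ∀ v ∈ (S19.matrixF n).vars,
          (fun w => if w ∈ vs then (S19.tau n i₀ πx πy w, 0) else Δ₀ w) v
            = S19.Δc (S19.tau n i₀ πx πy) 0 v := by
        intro v hv
        have hlt := S19.vars_lt hn2 v hv
        rcases Nat.lt_or_ge v 2 with h|h
        · interval_cases v
          · have : (0:ℕ) ∉ vs := by rw [hmemvs]; omega
            simp only [this, if_false, h0]
            show (πx, 0) = (S19.tau n i₀ πx πy 0, 0)
            rw [S19.tau_0]
          · have : (1:ℕ) ∉ vs := by rw [hmemvs]; omega
            simp only [this, if_false, h1]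
            show (πy, 0) = (S19.tau n i₀ πx πy 1, 0)
            rw [S19.tau_1]
        · have hmem : v ∈ vs := by rw [hmemvs]; omega
          simp only [hmem, if_true]
          rfl
      exact (S19.sat_congr _ _ _ _ hagree).mpr hsat
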